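/- arXiv:2601.19455 — 4 statements merged into one kernel-verified Lean document; each statement's English description precedes it below -/
import Mathlib

section
/- Let g be a Lie algebra over a field of characteristic zero and h ⊆ g a Lie subalgebra. Let U g be the universal enveloping algebra of g with canonical embedding ι : g → U g. Then for every w ∈ g, ι(w) lies in the left ideal (U g)·ι(h) generated by ι(h) if and only if w ∈ h; equivalently, ι(g) ∩ (U g)·ι(h) = ι(h). -/
/-!
Choose a basis `b` of `g` adapted to `h`, ordered so that the basis vectors of `h` come last.
Rewriting words in the letters `b i` by `b u b v = b v b u + ⁅b u, b v⁆` (for `v < u`) until they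
are nondecreasing gives a normal form that does not depend on the order of the rewrites: the one
nontrivial ambiguity `x u v`, `v < u < x`, resolves by the Jacobi identity. Prepending a letter
and normalising is therefore a representation of `g`, hence of `U g`, on the free module over
words. The words ending in a letter of `h` span a `U g`-submodule: a rewrite at the end replaces
the last letter `v ∈ h` by some `u > v`, which lies in `h` because the letters of `h` are the
largest, or by the letters of `⁅b u, b v⁆ ∈ h`. Acting on the empty word, every element of
`(U g)·ι(h)` lands in this submodule, while `ι(w)` sends it to `∑ wᵢ [i]`; so all coordinates of
`w` outside `h` vanish.
-/

section

attribute [local instance] LieRing.ofAssociativeRing LieAlgebra.ofAssociativeAlgebra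

theorem LinearMap.map_lie_of_basis {k I L A : Type*} [CommRing k] [LieRing L] [LieAlgebra k L]
    [Ring A] [Algebra k A] (b : Module.Basis I k L) (f : L →ₗ[k] A)
    (h : ∀ i j, f ⁅b i, b j⁆ = ⁅f (b i), f (b j)⁆) (x y : L) : f ⁅x, y⁆ = ⁅f x, f y⁆ :=
  LinearMap.congr_fun₂ (LinearMap.ext_basis
    (B := (LieModule.toEnd k L L : L →ₗ[k] Module.End k L).compr₂ f)
    (B' := (LieModule.toEnd k A A : A →ₗ[k] Module.End k A).compl₁₂ f f) b b h) x y

end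

theorem UniversalEnvelopingAlgebra.algHom_apply_mem {R L M : Type*} [CommRing R] [LieRing L]
    [LieAlgebra R L] [AddCommGroup M] [Module R M]
    (F : UniversalEnvelopingAlgebra R L →ₐ[R] Module.End R M) {p : Submodule R M}
    (hF : ∀ x, ∀ m ∈ p, F (ι R x) m ∈ p) (u : UniversalEnvelopingAlgebra R L) :
    ∀ m ∈ p, F u m ∈ p := by
  obtain ⟨u, rfl⟩ : ∃ t, mkAlgHom R L t = u := RingCon.mkₐ_surjective _ u
  induction u using TensorAlgebra.induction with
  | algebraMap r => simpa using fun m hm => p.smul_mem r hm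
  | ι x => exact hF x
  | mul a c iha ihc => simpa using fun m hm => iha _ (ihc m hm)
  | add a c iha ihc => simpa using fun m hm => p.add_mem (iha m hm) (ihc m hm)

universe u in
theorem Submodule.exists_basis_isUpperSet_span_eq {K : Type*} {V : Type u} [Field K]
    [AddCommGroup V] [Module K V] (p : Submodule K V) :
    ∃ (I : Type u) (_ : LinearOrder I) (b : Module.Basis I K V) (R : Set I),
      IsUpperSet R ∧ Submodule.span K (b '' R) = p := by
  obtain ⟨q, hq⟩ := p.exists_isCompl
  let bq := Module.Basis.ofVectorSpace K q
  let bp := Module.Basis.ofVectorSpace K p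
  let _ := IsWellOrder.linearOrder (WellOrderingRel (α := Module.Basis.ofVectorSpaceIndex K q))
  let _ := IsWellOrder.linearOrder (WellOrderingRel (α := Module.Basis.ofVectorSpaceIndex K p))
  let b := ((bq.prod bp).map (q.prodEquivOfIsCompl p hq.symm)).reindex toLex
  have hb (j) : b (toLex (.inr j)) = bp j := by simp [b]
  refine ⟨_, inferInstance, b, Set.range (toLex ∘ Sum.inr), ?_, ?_⟩
  · rintro c d hcd ⟨j, rfl⟩
    induction d with | _ d => ?_
    rcases d with i | j'
    · simp at hcd
    · exact ⟨j', rfl⟩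
  · rw [← Set.range_comp]
    have : ⇑b ∘ toLex ∘ Sum.inr = p.subtype ∘ bp := funext hb
    rw [this, Set.range_comp, Submodule.span_image, bp.span_eq, Submodule.map_subtype_top]

noncomputable section

namespace PBW

section Words

variable {I : Type*}

def wordsEndingIn (R : Set I) : Set (List I) := {l | ∃ i ∈ R, l.getLast? = some i}

variable {R : Set I}

theorem append_cons_mem_wordsEndingIn_iff {a t : List I} {x : I} :
    a ++ x :: t ∈ wordsEndingIn R ↔ x :: t ∈ wordsEndingIn R := by
  simp only [wordsEndingIn, Set.mem_ofPred_eq, List.getLast?_append_cons]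

theorem cons_mem_wordsEndingIn_iff {t : List I} {x : I} (ht : t ≠ []) :
    x :: t ∈ wordsEndingIn R ↔ t ∈ wordsEndingIn R := by
  obtain ⟨y, s, rfl⟩ := List.exists_cons_of_ne_nil ht
  simp only [wordsEndingIn, Set.mem_ofPred_eq, List.getLast?_cons_cons]

@[simp]
theorem singleton_mem_wordsEndingIn_iff {x : I} : [x] ∈ wordsEndingIn R ↔ x ∈ R := by
  simp [wordsEndingIn]

variable [LinearOrder I]

def firstDescent : List I → Option (List I × I × I × List I)
  | x :: y :: t =>
    if y < x then some ([], x, y, t)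
    else (firstDescent (y :: t)).map fun (a, u, v, s) => (x :: a, u, v, s)
  | _ => none

theorem eq_append_of_firstDescent_eq_some : ∀ {l a : List I} {u v : I} {t : List I},
    firstDescent l = some (a, u, v, t) → l = a ++ u :: v :: t ∧ v < u
  | x :: y :: s, a, u, v, t, h => by
    rw [firstDescent] at h
    split_ifs at h with hyx
    · obtain ⟨rfl, rfl, rfl, rfl⟩ := by simpa using h
      exact ⟨rfl, hyx⟩
    · obtain ⟨⟨a', u', v', t'⟩, hd, he⟩ := Option.map_eq_some_iff.mp h
      obtain ⟨rfl, rfl, rfl, rfl⟩ := by simpa using he.symm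
      obtain ⟨hys, hvu⟩ := eq_append_of_firstDescent_eq_some hd
      exact ⟨by simp [hys], hvu⟩

theorem firstDescent_cons_cons_of_lt {u v : I} (t : List I) (h : v < u) :
    firstDescent (u :: v :: t) = some ([], u, v, t) := by
  rw [firstDescent, if_pos h]

theorem firstDescent_cons_of_not_lt {x y : I} {s a : List I} {u v : I} {t : List I}
    (hyx : ¬ y < x) (h : firstDescent (y :: s) = some (a, u, v, t)) :
    firstDescent (x :: y :: s) = some (x :: a, u, v, t) := by
  rw [firstDescent, if_neg hyx, h]
  rfl

def inversions : List I → ℕ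
  | [] => 0
  | x :: t => t.countP (· < x) + inversions t

theorem inversions_swap {u v : I} (h : v < u) :
    ∀ a t : List I, inversions (a ++ v :: u :: t) + 1 = inversions (a ++ u :: v :: t)
  | [], t => by simp [inversions, h, not_lt_of_gt h]; ring
  | x :: a, t => by
    have hperm : (a ++ v :: u :: t).Perm (a ++ u :: v :: t) := .append_left a (.swap _ _ _)
    have := inversions_swap h a t
    simp only [List.cons_append, inversions, hperm.countP_eq]
    omega

def rank (l : List I) : ℕ ×ₗ ℕ := toLex (l.length, inversions l)

theorem rank_lt_of_length_lt {l l' : List I} (h : l'.length < l.length) : rank l' < rank l :=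
  Prod.Lex.toLex_lt_toLex.mpr (.inl h)

theorem rank_swap_lt {u v : I} (h : v < u) (a t : List I) :
    rank (a ++ v :: u :: t) < rank (a ++ u :: v :: t) :=
  Prod.Lex.toLex_lt_toLex.mpr (.inr ⟨by simp, by have := inversions_swap h a t; omega⟩)

end Words

section NormalForm

variable {k : Type*} [CommRing k] {g : Type*} [LieRing g] [LieAlgebra k g]
  {I : Type*} [LinearOrder I] (b : Module.Basis I k g)

/-- A word `l` stands for `b l₁ ⋯ b lₙ ∈ U g`; its normal form is obtained by rewriting the
leftmost descent `u v` (`v < u`) as `v u + ⁅b u, b v⁆` until the word is nondecreasing. -/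
def normalForm (l : List I) : List I →₀ k :=
  match h : firstDescent l with
  | none => Finsupp.single l 1
  | some (a, u, v, t) =>
    normalForm (a ++ v :: u :: t) +
      Finsupp.linearCombination k (fun m => normalForm (a ++ m :: t)) (b.repr ⁅b u, b v⁆)
termination_by rank l
decreasing_by
  all_goals obtain ⟨rfl, hvu⟩ := eq_append_of_firstDescent_eq_some h
  · exact rank_swap_lt hvu a t
  · exact rank_lt_of_length_lt (by simp)

/-- `normalFormInfix b a t w` is the normal form of the word `a w t` with a letter `w ∈ g`. -/
def normalFormInfix (a t : List I) : g →ₗ[k] List I →₀ k :=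
  Finsupp.linearCombination k (fun m => normalForm b (a ++ m :: t)) ∘ₗ b.repr.toLinearMap

@[simp]
theorem normalFormInfix_basis (a t : List I) (m : I) :
    normalFormInfix b a t (b m) = normalForm b (a ++ m :: t) := by
  simp [normalFormInfix]

theorem normalForm_of_firstDescent_eq_none {l : List I} (h : firstDescent l = none) :
    normalForm b l = Finsupp.single l 1 := by
  rw [normalForm, h]

theorem normalForm_of_firstDescent_eq_some {l a t : List I} {u v : I}
    (h : firstDescent l = some (a, u, v, t)) :
    normalForm b l = normalForm b (a ++ v :: u :: t) + normalFormInfix b a t ⁅b u, b v⁆ := by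
  rw [normalForm, h]
  rfl

@[simp]
theorem normalForm_singleton (i : I) : normalForm b [i] = Finsupp.single [i] 1 :=
  normalForm_of_firstDescent_eq_none b rfl

theorem normalForm_cons_cons (u v : I) (t : List I) :
    normalForm b (u :: v :: t) =
      normalForm b (v :: u :: t) + normalFormInfix b [] t ⁅b u, b v⁆ := by
  rcases lt_trichotomy v u with h | rfl | h
  · exact normalForm_of_firstDescent_eq_some b (firstDescent_cons_cons_of_lt t h)
  · simp
  · rw [normalForm_of_firstDescent_eq_some b (firstDescent_cons_cons_of_lt t h), ← lie_skew,
      map_neg]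
    simp

theorem normalFormInfix_cons_sub (y : I) (t : List I) (w : g) :
    normalFormInfix b [] (y :: t) w - normalFormInfix b [y] t w =
      normalFormInfix b [] t ⁅w, b y⁆ := by
  suffices normalFormInfix b [] (y :: t) - normalFormInfix b [y] t =
      normalFormInfix b [] t ∘ₗ (LieModule.toEnd k g g : g →ₗ[k] Module.End k g).flip (b y) from
    LinearMap.congr_fun this w
  refine b.ext fun m => ?_
  simp [normalForm_cons_cons b m y t]

/-- `normalFormInfix₂ b a s t w w'` is the normal form of the word `a w s w' t`. -/
def normalFormInfix₂ (a s t : List I) : g →ₗ[k] g →ₗ[k] List I →₀ k :=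
  Finsupp.linearCombination k (fun m => normalFormInfix b (a ++ m :: s) t) ∘ₗ b.repr.toLinearMap

@[simp]
theorem normalFormInfix₂_basis (a s t : List I) (m : I) :
    normalFormInfix₂ b a s t (b m) = normalFormInfix b (a ++ m :: s) t := by
  simp [normalFormInfix₂]

theorem normalFormInfix₂_apply_basis (a s t : List I) (w : g) (p : I) :
    normalFormInfix₂ b a s t w (b p) = normalFormInfix b a (s ++ p :: t) w :=
  LinearMap.congr_fun (b.ext (f₁ := (normalFormInfix₂ b a s t).flip (b p)) fun m => by simp) w

def RewriteCompatible (L : List I) : Prop :=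
  ∀ a u v t, L = a ++ u :: v :: t → v < u →
    normalForm b L = normalForm b (a ++ v :: u :: t) + normalFormInfix b a t ⁅b u, b v⁆

/-- The overlap ambiguity `x u v`, `v < u < x`, resolves by the Jacobi identity. -/
theorem normalForm_overlap {x u v : I} (t : List I) (hvu : v < u) (hux : u < x) :
    normalForm b (x :: u :: v :: t) =
      normalForm b (x :: v :: u :: t) + normalFormInfix b [x] t ⁅b u, b v⁆ := by
  have hvx : v < x := hvu.trans hux
  have e1 := normalForm_cons_cons b x u (v :: t)
  have e2 := normalForm_of_firstDescent_eq_some b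
    (firstDescent_cons_of_not_lt hux.not_gt (firstDescent_cons_cons_of_lt t hvx))
  have e3 := normalForm_cons_cons b u v (x :: t)
  have e4 := normalForm_cons_cons b x v (u :: t)
  have e5 := normalForm_of_firstDescent_eq_some b
    (firstDescent_cons_of_not_lt hvx.not_gt (firstDescent_cons_cons_of_lt t hux))
  have jacobi : ⁅⁅b x, b u⁆, b v⁆ + ⁅⁅b u, b v⁆, b x⁆ - ⁅⁅b x, b v⁆, b u⁆ = 0 := by
    rw [lie_lie, ← lie_skew ⁅b u, b v⁆, ← lie_skew ⁅b x, b v⁆]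
    abel
  have key : (normalFormInfix b [] (v :: t) ⁅b x, b u⁆ - normalFormInfix b [v] t ⁅b x, b u⁆) +
      (normalFormInfix b [] (x :: t) ⁅b u, b v⁆ - normalFormInfix b [x] t ⁅b u, b v⁆) -
      (normalFormInfix b [] (u :: t) ⁅b x, b v⁆ - normalFormInfix b [u] t ⁅b x, b v⁆) = 0 := by
    rw [normalFormInfix_cons_sub, normalFormInfix_cons_sub, normalFormInfix_cons_sub,
      ← map_add, ← map_sub, jacobi, map_zero]
  simp only [List.cons_append, List.nil_append] at e1 e2 e3 e4 e5 ⊢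
  rw [e1, e2, e3, e4, e5, ← sub_eq_zero, ← key]
  abel

/-- Both orders of rewriting the disjoint descents `x y` and `u v` produce the same cross term
`⁅b x, b y⁆ A ⁅b u, b v⁆ t`. -/
theorem normalForm_disjoint {x y u v : I} (A t : List I) (hyx : y < x) (hvu : v < u)
    (ih : ∀ L, rank L < rank (x :: y :: A ++ u :: v :: t) → RewriteCompatible b L) :
    normalForm b (x :: y :: A ++ u :: v :: t) =
      normalForm b (x :: y :: A ++ v :: u :: t) +
        normalFormInfix b (x :: y :: A) t ⁅b u, b v⁆ := by
  set P := A ++ u :: v :: t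
  set P' := A ++ v :: u :: t
  have d1 := normalForm_cons_cons b x y P
  have d2 : normalForm b (y :: x :: P) =
      normalForm b (y :: x :: P') + normalFormInfix b (y :: x :: A) t ⁅b u, b v⁆ :=
    ih _ (by simpa using rank_swap_lt hyx [] P) (y :: x :: A) u v t (by simp [P]) hvu
  have d3 : normalFormInfix b [] P ⁅b x, b y⁆ = normalFormInfix b [] P' ⁅b x, b y⁆ +
      normalFormInfix₂ b [] A t ⁅b x, b y⁆ ⁅b u, b v⁆ := by
    refine LinearMap.congr_fun (f := normalFormInfix b [] P)
      (g := normalFormInfix b [] P' + (normalFormInfix₂ b [] A t).flip ⁅b u, b v⁆)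
      (b.ext fun m => ?_) ⁅b x, b y⁆
    simpa [P, P'] using ih (m :: P) (rank_lt_of_length_lt (by simp [P])) (m :: A) u v t
      (by simp [P]) hvu
  have d4 := normalForm_cons_cons b x y P'
  have d5 : normalFormInfix b (x :: y :: A) t ⁅b u, b v⁆ =
      normalFormInfix b (y :: x :: A) t ⁅b u, b v⁆ +
        normalFormInfix₂ b [] A t ⁅b x, b y⁆ ⁅b u, b v⁆ := by
    refine LinearMap.congr_fun (f := normalFormInfix b (x :: y :: A) t)
      (g := normalFormInfix b (y :: x :: A) t + normalFormInfix₂ b [] A t ⁅b x, b y⁆)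
      (b.ext fun p => ?_) ⁅b u, b v⁆
    simpa [normalFormInfix₂_apply_basis] using normalForm_cons_cons b x y (A ++ p :: t)
  simp only [List.cons_append] at d2 d5 ⊢
  rw [d1, d2, d3, d4, d5]
  abel

def basisAction (i : I) : (List I →₀ k) →ₗ[k] List I →₀ k :=
  Finsupp.linearCombination k fun K => normalForm b (i :: K)

@[simp]
theorem basisAction_single (i : I) (K : List I) :
    basisAction b i (Finsupp.single K 1) = normalForm b (i :: K) := by
  simp [basisAction]

def ConsCompatible (L : List I) : Prop :=
  ∀ x l, L = x :: l → normalForm b L = basisAction b x (normalForm b l)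

theorem basisAction_normalFormInfix {x : I} {a t : List I}
    (h : ∀ m, ConsCompatible b (x :: a ++ m :: t)) (w : g) :
    basisAction b x (normalFormInfix b a t w) = normalFormInfix b (x :: a) t w :=
  LinearMap.congr_fun (b.ext (f₁ := basisAction b x ∘ₗ normalFormInfix b a t) fun m => by
    simpa using (h m x (a ++ m :: t) rfl).symm) w

theorem basisAction_normalForm_of_rewrite {x u v : I} {a t : List I} (hvu : v < u)
    (hrw : normalForm b (a ++ u :: v :: t) =
      normalForm b (a ++ v :: u :: t) + normalFormInfix b a t ⁅b u, b v⁆)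
    (ih : ∀ L, rank L < rank (x :: a ++ u :: v :: t) → ConsCompatible b L) :
    basisAction b x (normalForm b (a ++ u :: v :: t)) =
      normalForm b (x :: a ++ v :: u :: t) + normalFormInfix b (x :: a) t ⁅b u, b v⁆ := by
  rw [hrw, map_add, basisAction_normalFormInfix b fun m => ih _ (rank_lt_of_length_lt (by simp)),
    ih (x :: a ++ v :: u :: t) (rank_swap_lt hvu (x :: a) t) x (a ++ v :: u :: t) rfl]

theorem normalForm_cons_of_firstDescent_eq_some {x : I} {l a t : List I} {u v : I}
    (h : firstDescent l = some (a, u, v, t))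
    (ih : ∀ L, rank L < rank (x :: l) → RewriteCompatible b L) :
    normalForm b (x :: l) =
      normalForm b (x :: a ++ v :: u :: t) + normalFormInfix b (x :: a) t ⁅b u, b v⁆ := by
  obtain ⟨rfl, hvu⟩ := eq_append_of_firstDescent_eq_some h
  obtain ⟨y, s, hys⟩ : ∃ y s, a ++ u :: v :: t = y :: s :=
    List.exists_cons_of_ne_nil (by simp)
  by_cases hyx : y < x
  · rcases a with _ | ⟨y', A⟩
    · obtain ⟨rfl, -⟩ := List.cons_eq_cons.mp hys
      exact normalForm_overlap b t hvu hyx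
    · obtain ⟨rfl, -⟩ := List.cons_eq_cons.mp hys
      exact normalForm_disjoint b A t hyx hvu ih
  · rw [hys] at h ⊢
    exact normalForm_of_firstDescent_eq_some b (firstDescent_cons_of_not_lt hyx h)

theorem consCompatible_of_forall_rank_lt {L : List I}
    (ih : ∀ L', rank L' < rank L → ConsCompatible b L' ∧ RewriteCompatible b L') :
    ConsCompatible b L := by
  rintro x l rfl
  cases h : firstDescent l with
  | none => rw [normalForm_of_firstDescent_eq_none b h, basisAction_single]
  | some q =>
    obtain ⟨a, u, v, t⟩ := q
    rw [normalForm_cons_of_firstDescent_eq_some b h fun L hL => (ih L hL).2]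
    obtain ⟨rfl, hvu⟩ := eq_append_of_firstDescent_eq_some h
    exact (basisAction_normalForm_of_rewrite b hvu (normalForm_of_firstDescent_eq_some b h)
      fun L hL => (ih L hL).1).symm

theorem rewriteCompatible_of_forall_rank_lt {L : List I} (hL : ConsCompatible b L)
    (ih : ∀ L', rank L' < rank L → ConsCompatible b L' ∧ RewriteCompatible b L') :
    RewriteCompatible b L := by
  rintro (_ | ⟨x, a⟩) u v t rfl hvu
  · exact normalForm_of_firstDescent_eq_some b (firstDescent_cons_cons_of_lt t hvu)
  · rw [hL x _ rfl]
    exact basisAction_normalForm_of_rewrite b hvu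
      ((ih _ (rank_lt_of_length_lt (by simp))).2 a u v t rfl hvu) fun L hL => (ih L hL).1

theorem consCompatible_and_rewriteCompatible (L : List I) :
    ConsCompatible b L ∧ RewriteCompatible b L :=
  have ih L' (_ : rank L' < rank L) := consCompatible_and_rewriteCompatible L'
  have hL := consCompatible_of_forall_rank_lt b ih
  ⟨hL, rewriteCompatible_of_forall_rank_lt b hL ih⟩
termination_by rank L
decreasing_by assumption

theorem normalForm_cons (x : I) (l : List I) :
    normalForm b (x :: l) = basisAction b x (normalForm b l) :=
  (consCompatible_and_rewriteCompatible b (x :: l)).1 x l rfl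

def action : g →ₗ[k] Module.End k (List I →₀ k) :=
  Finsupp.linearCombination k (basisAction b) ∘ₗ b.repr.toLinearMap

@[simp]
theorem action_basis (i : I) : action b (b i) = basisAction b i := by
  simp [action]

theorem action_single (x : g) (K : List I) :
    action b x (Finsupp.single K 1) = normalFormInfix b [] K x :=
  LinearMap.congr_fun (b.ext (f₁ := (action b).flip (Finsupp.single K 1)) fun m => by simp) x

section

attribute [local instance] LieRing.ofAssociativeRing LieAlgebra.ofAssociativeAlgebra

theorem action_lie_basis (i j : I) :
    action b ⁅b i, b j⁆ = ⁅action b (b i), action b (b j)⁆ := by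
  refine Finsupp.lhom_ext' fun K => LinearMap.ext_ring ?_
  simp [action_single, ← normalForm_cons, normalForm_cons_cons b i j K]

def representation : g →ₗ⁅k⁆ Module.End k (List I →₀ k) :=
  { action b with
    map_lie' {x y} := LinearMap.map_lie_of_basis (A := Module.End k (List I →₀ k)) b (action b)
      (action_lie_basis b) x y }

end

def envAction : UniversalEnvelopingAlgebra k g →ₐ[k] Module.End k (List I →₀ k) :=
  UniversalEnvelopingAlgebra.lift k (representation b)

@[simp]
theorem envAction_ι (x : g) : envAction b (UniversalEnvelopingAlgebra.ι k x) = action b x :=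
  UniversalEnvelopingAlgebra.lift_ι_apply k (representation b) x

variable {b} {R : Set I}

theorem normalFormInfix_mem {p : Submodule k (List I →₀ k)} {a t : List I} {w : g}
    (h : ∀ m ∈ (b.repr w).support, normalForm b (a ++ m :: t) ∈ p) :
    normalFormInfix b a t w ∈ p :=
  Submodule.finsuppSum_mem _ _ _ _ fun m hm => p.smul_mem _ (h m (Finsupp.mem_support_iff.mpr hm))

theorem normalForm_mem_supported (hR : IsUpperSet R)
    (hbr : ∀ u ∈ R, ∀ v ∈ R, ⁅b u, b v⁆ ∈ Submodule.span k (b '' R)) (l : List I)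
    (hl : l ∈ wordsEndingIn R) :
    normalForm b l ∈ Finsupp.supported k k (wordsEndingIn R) := by
  have ih l' (_ : rank l' < rank l) := normalForm_mem_supported hR hbr l'
  cases h : firstDescent l with
  | none => simpa [normalForm_of_firstDescent_eq_none b h] using Finsupp.single_mem_supported k 1 hl
  | some q =>
    obtain ⟨a, u, v, t⟩ := q
    rw [normalForm_of_firstDescent_eq_some b h]
    obtain ⟨rfl, hvu⟩ := eq_append_of_firstDescent_eq_some h
    have hrw := ih _ (rank_swap_lt hvu a t)
    have hbracket m := ih (a ++ m :: t) (rank_lt_of_length_lt (by simp))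
    rcases eq_or_ne t [] with rfl | ht
    · have hv : v ∈ R := by
        simpa [append_cons_mem_wordsEndingIn_iff, cons_mem_wordsEndingIn_iff] using hl
      have hu : u ∈ R := hR hvu.le hv
      refine add_mem (hrw ?_) (normalFormInfix_mem fun m hm => hbracket m ?_)
      · simpa [append_cons_mem_wordsEndingIn_iff, cons_mem_wordsEndingIn_iff] using hu
      · simpa [append_cons_mem_wordsEndingIn_iff] using b.mem_span_image.mp (hbr u hu v hv) hm
    · simp only [append_cons_mem_wordsEndingIn_iff, cons_mem_wordsEndingIn_iff ht,
        cons_mem_wordsEndingIn_iff (List.cons_ne_nil _ _)] at hl hrw hbracket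
      exact add_mem (hrw hl) (normalFormInfix_mem fun m _ => hbracket m hl)
termination_by rank l
decreasing_by assumption

theorem basisAction_mem_supported (hR : IsUpperSet R)
    (hbr : ∀ u ∈ R, ∀ v ∈ R, ⁅b u, b v⁆ ∈ Submodule.span k (b '' R)) (i : I)
    {f : List I →₀ k} (hf : f ∈ Finsupp.supported k k (wordsEndingIn R)) :
    basisAction b i f ∈ Finsupp.supported k k (wordsEndingIn R) := by
  refine Submodule.finsuppSum_mem _ _ _ _ fun K hK => Submodule.smul_mem _ _ ?_
  have hK : K ∈ wordsEndingIn R := hf (Finsupp.mem_support_iff.mpr hK)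
  have hK_ne : K ≠ [] := by
    rintro rfl
    simp [wordsEndingIn] at hK
  exact normalForm_mem_supported hR hbr _ ((cons_mem_wordsEndingIn_iff hK_ne).mpr hK)

theorem action_mem_supported (hR : IsUpperSet R)
    (hbr : ∀ u ∈ R, ∀ v ∈ R, ⁅b u, b v⁆ ∈ Submodule.span k (b '' R)) (x : g)
    {f : List I →₀ k} (hf : f ∈ Finsupp.supported k k (wordsEndingIn R)) :
    action b x f ∈ Finsupp.supported k k (wordsEndingIn R) := by
  set p := Finsupp.supported k k (wordsEndingIn R)
  have hbasis (i : I) : basisAction b i ∈ p.compatibleMaps p :=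
    fun _ => basisAction_mem_supported hR hbr i
  have : action b x ∈ p.compatibleMaps p :=
    Submodule.finsuppSum_mem _ _ _ _ fun i _ => Submodule.smul_mem _ _ (hbasis i)
  exact this hf

theorem normalFormInfix_nil_nil :
    normalFormInfix b [] [] = Finsupp.lmapDomain k k (fun i : I => [i]) ∘ₗ b.repr.toLinearMap :=
  b.ext fun i => by simp

theorem mem_span_image_of_ι_mem_span (hR : IsUpperSet R)
    (hbr : ∀ u ∈ R, ∀ v ∈ R, ⁅b u, b v⁆ ∈ Submodule.span k (b '' R)) {X : Set g}
    (hX : X ⊆ Submodule.span k (b '' R)) {w : g}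
    (hw : UniversalEnvelopingAlgebra.ι k w ∈
      Submodule.span (UniversalEnvelopingAlgebra k g) (UniversalEnvelopingAlgebra.ι k '' X)) :
    w ∈ Submodule.span k (b '' R) := by
  have hword (x : g) (hx : x ∈ Submodule.span k (b '' R)) :
      action b x (Finsupp.single [] 1) ∈ Finsupp.supported k k (wordsEndingIn R) := by
    rw [action_single]
    exact normalFormInfix_mem fun m hm => by
      simpa using Finsupp.single_mem_supported k (1 : k)
        (singleton_mem_wordsEndingIn_iff.mpr (b.mem_span_image.mp hx hm))
  have hideal (u) (hu : u ∈ Submodule.span (UniversalEnvelopingAlgebra k g)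
      (UniversalEnvelopingAlgebra.ι k '' X)) :
      envAction b u (Finsupp.single [] 1) ∈ Finsupp.supported k k (wordsEndingIn R) := by
    induction hu using Submodule.span_induction with
    | mem _ hy =>
      obtain ⟨x, hx, rfl⟩ := hy
      rw [envAction_ι]
      exact hword x (hX hx)
    | zero => simp
    | add _ _ _ _ h₁ h₂ => simpa using add_mem h₁ h₂
    | smul a _ _ h =>
      simpa using UniversalEnvelopingAlgebra.algHom_apply_mem (envAction b)
        (fun x _ hf => by rw [envAction_ι]; exact action_mem_supported hR hbr x hf) a _ h
  have hw' := hideal _ hw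
  rw [envAction_ι, action_single, normalFormInfix_nil_nil] at hw'
  refine b.mem_span_image.mpr fun j hj => ?_
  have : [j] ∈ wordsEndingIn R := hw' (by
    simpa [Finsupp.mapDomain_support_of_injective (List.singleton_injective)] using hj)
  simpa using this

end NormalForm

end PBW

end

theorem lie_inter_left_ideal_of_subalgebra_general
    (k : Type*) [Field k] (g : Type*) [LieRing g] [LieAlgebra k g]
    (h : LieSubalgebra k g) (w : g) :
    UniversalEnvelopingAlgebra.ι k w ∈
      Submodule.span (UniversalEnvelopingAlgebra k g)
        (UniversalEnvelopingAlgebra.ι k '' (h : Set g)) ↔ w ∈ h := by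
  refine ⟨fun hw => ?_, fun hw => Submodule.subset_span ⟨w, hw, rfl⟩⟩
  obtain ⟨I, _, b, R, hR, hspan⟩ := h.toSubmodule.exists_basis_isUpperSet_span_eq
  have hmem (x : g) : x ∈ Submodule.span k (b '' R) ↔ x ∈ h := by
    rw [hspan, LieSubalgebra.mem_toSubmodule]
  have hb (i) (hi : i ∈ R) : b i ∈ h := (hmem _).mp (Submodule.subset_span ⟨i, hi, rfl⟩)
  have hbr (u) (hu : u ∈ R) (v) (hv : v ∈ R) : ⁅b u, b v⁆ ∈ Submodule.span k (b '' R) :=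
    (hmem _).mpr (h.lie_mem (hb u hu) (hb v hv))
  exact (hmem w).mp (PBW.mem_span_image_of_ι_mem_span hR hbr (fun x hx => (hmem x).mpr hx) hw)

/-- For a Lie algebra `g` over a field of characteristic zero and a Lie subalgebra `h ⊆ g`,
an element `w ∈ g` satisfies `ι w ∈ (U g)·ι(h)` if and only if `w ∈ h`; that is,
`ι(g) ∩ (U g)·ι(h) = ι(h)`. -/
theorem lie_inter_left_ideal_of_subalgebra
    (k : Type*) [Field k] [CharZero k] (g : Type*) [LieRing g] [LieAlgebra k g]
    (h : LieSubalgebra k g) (w : g) :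
    UniversalEnvelopingAlgebra.ι k w ∈
      Submodule.span (UniversalEnvelopingAlgebra k g)
        (UniversalEnvelopingAlgebra.ι k '' (h : Set g)) ↔ w ∈ h :=
  lie_inter_left_ideal_of_subalgebra_general k g h w
end

section
/- Let A be the free associative algebra over ℂ on generators X₁,…,X_n, Z (n ≥ 1). Let I := A·Z + Σ_{1≤i<j≤n} (X_i)(X_j), where (X_i) denotes the two-sided ideal of A generated by X_i, and let C ⊆ A be the linear span of the monomials w_{a,κ} := Z^{a_N−1} X_{κ(N)} ⋯ Z^{a₁−1} X_{κ(1)} over all N ≥ 0, a = (a₁,…,a_N) ∈ (ℤ_{≥1})^N and non-decreasing maps κ : {1,…,N} → {1,…,n} (with w_{a,κ} := 1 when N = 0). Then A = C ⊕ I as vector spaces. -/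
open scoped BigOperators

variable (n : ℕ)

/-- The free associative algebra over `ℂ` on generators `X₁, …, Xₙ, Z`. -/
abbrev A (n : ℕ) : Type := FreeAlgebra ℂ (Fin n ⊕ Unit)

noncomputable def X (i : Fin n) : A n := FreeAlgebra.ι ℂ (Sum.inl i)
noncomputable def Z : A n := FreeAlgebra.ι ℂ (Sum.inr ())

/-- The two-sided ideal of `A n` generated by `X i`, as a `ℂ`-subspace. -/
noncomputable def twoSidedX (i : Fin n) : Submodule ℂ (A n) :=
  Submodule.span ℂ {u : A n | ∃ a b : A n, u = a * X n i * b}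

/-- `I := A·Z + Σ_{i<j} (X_i)(X_j)`. -/
noncomputable def I (n : ℕ) : Submodule ℂ (A n) :=
  Submodule.span ℂ {u : A n | ∃ a : A n, u = a * Z n} +
    ∑ i : Fin n, ∑ j : Fin n, if i < j then twoSidedX n i * twoSidedX n j else ⊥

/-- The monomial `w_{a,κ} = Z^{a_N−1} X_{κ(N)} ⋯ Z^{a₁−1} X_{κ(1)}`. -/
noncomputable def w (N : ℕ) (a : Fin N → ℕ) (κ : Fin N → Fin n) : A n :=
  ((List.ofFn fun i : Fin N => Z n ^ (a i - 1) * X n (κ i)).reverse).prod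

/-- The span of the monomials `w_{a,κ}` over all `N ≥ 0`, `a ∈ (ℤ_{≥1})^N` and
non-decreasing `κ`. -/
noncomputable def C (n : ℕ) : Submodule ℂ (A n) :=
  Submodule.span ℂ
    {u : A n | ∃ (N : ℕ) (a : Fin N → ℕ) (κ : Fin N → Fin n),
      (∀ i, 1 ≤ a i) ∧ Monotone κ ∧ u = w n N a κ}

/-! The words in `X₁, …, Xₙ, Z` form a basis of `A`, and both summands are spanned by words.
`C` is spanned by the *normal* words: those not ending in `Z` whose `X`-indices weakly
decrease from left to right, which are exactly the words `Z^{a_N-1} X_{κ N} ⋯ Z^{a₁-1} X_{κ 1}`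
with `κ` monotone. `A·Z` is spanned by the words ending in `Z`, and `(Xᵢ)(Xⱼ)` by the words
with an `Xᵢ` to the left of an `Xⱼ`, so `I` is spanned by the words that are not normal.
Complementary sets of basis vectors span complementary subspaces. -/

theorem Submodule.sum_span {R M ι : Type*} [Semiring R] [AddCommMonoid M] [Module R M]
    (s : Finset ι) (S : ι → Set M) :
    ∑ i ∈ s, span R (S i) = span R (⋃ i ∈ s, S i) := by
  classical
  induction s using Finset.induction_on with
  | empty => simp
  | insert i s hi ih =>
    rw [Finset.sum_insert hi, ih, Finset.set_biUnion_insert, span_union, add_eq_sup]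

section

variable {R A : Type*} [CommSemiring R] [Semiring A] [Algebra R A]

theorem Submodule.span_setOf_mul_eq (y : A) :
    span R {u | ∃ a, u = a * y} = ⊤ * span R {y} := by
  rw [← span_univ, span_mul_span]
  congr 1
  ext u; simp [eq_comm]

theorem Submodule.span_setOf_mul_mul_eq (y : A) :
    span R {u | ∃ a b, u = a * y * b} = ⊤ * span R {y} * ⊤ := by
  rw [← span_univ, span_mul_span, span_mul_span]
  congr 1
  ext u; simp [Set.mem_mul, eq_comm]

end

namespace FreeAlgebra

variable (R : Type*) {X : Type*} [CommSemiring R]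

noncomputable def wordMonomial (l : List X) : FreeAlgebra R X := (l.map (ι R)).prod

variable {R}

@[simp] theorem wordMonomial_cons (x : X) (l : List X) :
    wordMonomial R (x :: l) = ι R x * wordMonomial R l := List.prod_cons

@[simp] theorem wordMonomial_singleton (x : X) : wordMonomial R [x] = ι R x := by
  simp [wordMonomial]

@[simp] theorem wordMonomial_append (l l' : List X) :
    wordMonomial R (l ++ l') = wordMonomial R l * wordMonomial R l' := by
  simp [wordMonomial]

@[simp] theorem wordMonomial_replicate (k : ℕ) (x : X) :
    wordMonomial R (List.replicate k x) = ι R x ^ k := by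
  simp [wordMonomial]

theorem basisFreeMonoid_apply (w : FreeMonoid X) :
    basisFreeMonoid R X w = wordMonomial R w.toList := by
  simp [basisFreeMonoid, equivMonoidAlgebraFreeMonoid, wordMonomial, FreeMonoid.lift_apply]

theorem wordMonomial_eq_basisFreeMonoid :
    wordMonomial R = basisFreeMonoid R X ∘ FreeMonoid.ofList := by
  ext1 l
  simp [basisFreeMonoid_apply]

theorem linearIndependent_wordMonomial : LinearIndependent R (wordMonomial R (X := X)) := by
  rw [wordMonomial_eq_basisFreeMonoid]
  exact (basisFreeMonoid R X).linearIndependent.comp _ FreeMonoid.ofList.injective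

theorem span_range_wordMonomial : Submodule.span R (Set.range (wordMonomial R (X := X))) = ⊤ := by
  rw [wordMonomial_eq_basisFreeMonoid, Set.range_comp, FreeMonoid.ofList.range_eq_univ,
    Set.image_univ, (basisFreeMonoid R X).span_eq]

theorem span_wordMonomial_image_mul (S T : Set (List X)) :
    Submodule.span R (wordMonomial R '' S) * Submodule.span R (wordMonomial R '' T) =
      Submodule.span R (wordMonomial R '' Set.image2 (· ++ ·) S T) := by
  rw [Submodule.span_mul_span, ← Set.image2_mul, Set.image2_image_left, Set.image2_image_right,
    Set.image_image2]
  simp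

theorem span_setOf_mul_ι (x : X) :
    Submodule.span R {u | ∃ a, u = a * ι R x} =
      Submodule.span R (wordMonomial R '' {l | l.getLast? = some x}) := by
  rw [Submodule.span_setOf_mul_eq, ← span_range_wordMonomial, ← Set.image_univ,
    ← wordMonomial_singleton, ← Set.image_singleton, span_wordMonomial_image_mul]
  congr 2
  ext l; simp [List.getLast?_eq_some_iff, eq_comm]

theorem span_setOf_mul_ι_mul (x : X) :
    Submodule.span R {u | ∃ a b, u = a * ι R x * b} =
      Submodule.span R (wordMonomial R '' {l | x ∈ l}) := by
  rw [Submodule.span_setOf_mul_mul_eq, ← span_range_wordMonomial, ← Set.image_univ,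
    ← wordMonomial_singleton, ← Set.image_singleton, span_wordMonomial_image_mul,
    span_wordMonomial_image_mul]
  congr 2
  ext l; simp [List.mem_iff_append, eq_comm]

end FreeAlgebra

theorem List.getLast?_ne_of_getLast?_cons_ne {α : Type*} {x y : α} {l : List α}
    (h : (x :: l).getLast? ≠ some y) : l.getLast? ≠ some y := by
  cases l <;> simp_all

namespace XZWord

variable {ι : Type*}

def ofBlocks (L : List (ℕ × ι)) : List (ι ⊕ Unit) :=
  L.flatMap fun p => List.replicate p.1 (Sum.inr ()) ++ [Sum.inl p.2]

@[simp] theorem ofBlocks_nil : ofBlocks ([] : List (ℕ × ι)) = [] := rfl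

@[simp] theorem ofBlocks_cons (p : ℕ × ι) (L : List (ℕ × ι)) :
    ofBlocks (p :: L) = List.replicate p.1 (Sum.inr ()) ++ Sum.inl p.2 :: ofBlocks L := by
  simp [ofBlocks]

theorem filterMap_getLeft?_ofBlocks (L : List (ℕ × ι)) :
    (ofBlocks L).filterMap Sum.getLeft? = L.map Prod.snd := by
  induction L with
  | nil => rfl
  | cons p L ih => simp [ih, List.filterMap_replicate]

theorem getLast?_ofBlocks_ne (L : List (ℕ × ι)) :
    (ofBlocks L).getLast? ≠ some (Sum.inr ()) := by
  induction L with
  | nil => simp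
  | cons p L ih =>
    cases h : (ofBlocks L).getLast? <;> simp_all [List.getLast?_append, List.getLast?_cons]

theorem inl_mem_ofBlocks {L : List (ℕ × ι)} {i : ι} (h : i ∈ L.map Prod.snd) :
    Sum.inl i ∈ ofBlocks L := by
  simp only [List.mem_map] at h
  obtain ⟨⟨k, i⟩, hp, rfl⟩ := h
  simp only [ofBlocks, List.mem_flatMap]
  exact ⟨(k, i), hp, by simp⟩

variable [LinearOrder ι]

def HasAscent (l : List (ι ⊕ Unit)) : Prop :=
  ∃ i j, i < j ∧ ∃ u v, l = u ++ v ∧ Sum.inl i ∈ u ∧ Sum.inl j ∈ v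

theorem HasAscent.not_sortedGE {l : List (ι ⊕ Unit)} (h : HasAscent l) :
    ¬ (l.filterMap Sum.getLeft?).SortedGE := by
  obtain ⟨i, j, hij, u, v, rfl, hi, hj⟩ := h
  rw [List.filterMap_append, List.sortedGE_iff_pairwise, List.pairwise_append]
  exact fun h => (h.2.2 i (by simpa using hi) j (by simpa using hj)).not_gt hij

theorem not_hasAscent_ofBlocks {L : List (ℕ × ι)} (hL : (L.map Prod.snd).SortedGE) :
    ¬ HasAscent (ofBlocks L) :=
  fun h => h.not_sortedGE (by rwa [filterMap_getLeft?_ofBlocks])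

def IsNormal (l : List (ι ⊕ Unit)) : Prop :=
  l.getLast? ≠ some (Sum.inr ()) ∧ ¬ HasAscent l

theorem exists_ofBlocks_eq (l : List (ι ⊕ Unit)) (hZ : l.getLast? ≠ some (Sum.inr ()))
    (hA : ¬ HasAscent l) : ∃ L, (L.map Prod.snd).SortedGE ∧ ofBlocks L = l := by
  induction l with
  | nil => exact ⟨[], List.sortedGE_iff_pairwise.2 List.Pairwise.nil, rfl⟩
  | cons x l ih =>
    have hA' : ¬ HasAscent l := fun ⟨i, j, hij, u, v, hl, hi, hj⟩ =>
      hA ⟨i, j, hij, x :: u, v, by simp [hl], by simp [hi], hj⟩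
    rcases x with m | ⟨⟩
    case inl m =>
      obtain ⟨L, hL, rfl⟩ := ih (List.getLast?_ne_of_getLast?_cons_ne hZ) hA'
      refine ⟨(0, m) :: L, ?_, by simp⟩
      rw [List.map_cons, List.sortedGE_iff_pairwise, List.pairwise_cons]
      refine ⟨fun j hj => not_lt.1 fun hmj => hA ?_, hL.pairwise⟩
      exact ⟨m, j, hmj, [Sum.inl m], ofBlocks L, rfl, by simp, inl_mem_ofBlocks hj⟩
    case inr =>
      obtain ⟨L, hL, rfl⟩ := ih (List.getLast?_ne_of_getLast?_cons_ne hZ) hA'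
      obtain _ | ⟨⟨k, m⟩, L⟩ := L
      · simp at hZ
      · exact ⟨(k + 1, m) :: L, hL, by simp [List.replicate_succ]⟩

theorem isNormal_iff_exists_ofBlocks {l : List (ι ⊕ Unit)} :
    IsNormal l ↔ ∃ L, (L.map Prod.snd).SortedGE ∧ ofBlocks L = l := by
  constructor
  · exact fun h => exists_ofBlocks_eq l h.1 h.2
  · rintro ⟨L, hL, rfl⟩
    exact ⟨getLast?_ofBlocks_ne L, not_hasAscent_ofBlocks hL⟩

end XZWord

open FreeAlgebra XZWord Submodule

theorem wordMonomial_ofBlocks (L : List (ℕ × Fin n)) :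
    wordMonomial ℂ (ofBlocks L) = (L.map fun p => Z n ^ p.1 * X n p.2).prod := by
  induction L with
  | nil => rfl
  | cons p L ih => simp [ih, mul_assoc, Z, X]

theorem w_eq_wordMonomial_ofBlocks (N : ℕ) (a : Fin N → ℕ) (κ : Fin N → Fin n) :
    w n N a κ = wordMonomial ℂ (ofBlocks (List.ofFn fun i => (a i - 1, κ i)).reverse) := by
  rw [wordMonomial_ofBlocks, w, List.map_reverse, List.map_ofFn]
  rfl

theorem C_eq_span : C n = span ℂ (wordMonomial ℂ '' {l | IsNormal l}) := by
  rw [C]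
  congr 1
  ext u
  simp only [Set.mem_ofPred_eq, Set.mem_image, isNormal_iff_exists_ofBlocks]
  constructor
  · rintro ⟨N, a, κ, -, hκ, rfl⟩
    refine ⟨_, ⟨_, ?_, rfl⟩, (w_eq_wordMonomial_ofBlocks n N a κ).symm⟩
    simpa [List.map_reverse, Function.comp_def] using hκ
  · rintro ⟨_, ⟨L, hL, rfl⟩, rfl⟩
    refine ⟨L.reverse.length, fun i => L.reverse[(i : ℕ)].1 + 1, fun i => L.reverse[(i : ℕ)].2,
      fun _ => le_add_self, ?_, ?_⟩
    · rw [← List.sortedLE_ofFn_iff, List.ofFn_getElem_eq_map, List.map_reverse]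
      exact hL.reverse
    · simp only [w_eq_wordMonomial_ofBlocks, Nat.add_sub_cancel, Prod.mk.eta, List.ofFn_getElem,
        List.reverse_reverse]

theorem twoSidedX_eq_span (i : Fin n) :
    twoSidedX n i = span ℂ (wordMonomial ℂ '' {l | Sum.inl i ∈ l}) :=
  span_setOf_mul_ι_mul _

theorem ite_twoSidedX_mul_eq_span (i j : Fin n) :
    (if i < j then twoSidedX n i * twoSidedX n j else ⊥) =
      span ℂ (wordMonomial ℂ ''
        {l | i < j ∧ ∃ u v, l = u ++ v ∧ Sum.inl i ∈ u ∧ Sum.inl j ∈ v}) := by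
  split_ifs with hij
  · rw [twoSidedX_eq_span, twoSidedX_eq_span, span_wordMonomial_image_mul]
    congr 2
    ext l
    simp only [Set.mem_image2, Set.mem_ofPred_eq, hij, true_and]
    exact ⟨fun ⟨u, hu, v, hv, h⟩ => ⟨u, v, h.symm, hu, hv⟩,
      fun ⟨u, v, h, hu, hv⟩ => ⟨u, hu, v, hv, h.symm⟩⟩
  · simp [hij]

theorem I_eq_span : I n = span ℂ (wordMonomial ℂ '' {l | IsNormal l}ᶜ) := by
  simp_rw [I, ite_twoSidedX_mul_eq_span, sum_span, Z, span_setOf_mul_ι, Submodule.add_eq_sup,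
    ← span_union, ← Set.image_iUnion₂, ← Set.image_union]
  congr 2
  ext l
  simp [IsNormal, HasAscent, or_iff_not_imp_left]

theorem free_algebra_direct_sum_decomposition_general (n : ℕ) :
    IsCompl (C n) (I n) := by
  rw [C_eq_span, I_eq_span]
  exact linearIndependent_wordMonomial.isCompl_span_image span_range_wordMonomial isCompl_compl

theorem free_algebra_direct_sum_decomposition (n : ℕ) (hn : 1 ≤ n) :
    IsCompl (C n) (I n) :=
  free_algebra_direct_sum_decomposition_general n
end

section
/- With the notation below, f₃ decomposes as an internal direct sum of vector subspaces f₃ = ℂ·z ⊕ a_x ⊕ a_y ⊕ λ, where a_x (resp. a_y) is the Lie subalgebra of f₃ generated by { ad_z^k(x) : k ≥ 0 } (resp. { ad_z^k(y) : k ≥ 0 }); moreover a_x and a_y are free Lie algebras on these generators, i.e. there is a Lie algebra isomorphism from the free Lie algebra on countably many generators (e_k)_{k≥0} onto a_x sending e_k to ad_z^k(x), and similarly for a_y. -/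
/-- The free Lie algebra over `ℂ` on three generators `x`, `y`, `z`. -/
abbrev f3 : Type := FreeLieAlgebra ℂ (Fin 3)

noncomputable def x : f3 := FreeLieAlgebra.of ℂ 0
noncomputable def y : f3 := FreeLieAlgebra.of ℂ 1
noncomputable def z : f3 := FreeLieAlgebra.of ℂ 2

/-- `ad_z^k (w) = [z,[z,…,[z,w]…]]`. -/
noncomputable def adzk : ℕ → f3 → f3
  | 0, w => w
  | k + 1, w => ⁅z, adzk k w⁆

/-- The Lie subalgebra of `f3` generated by `{ ad_z^k (w) : k ≥ 0 }`. -/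
noncomputable def aSub (w : f3) : LieSubalgebra ℂ f3 :=
  LieSubalgebra.lieSpan ℂ f3 {v : f3 | ∃ k : ℕ, v = adzk k w}

/-- The Lie ideal `λ := ⁅[x],[y]⁆`. -/
noncomputable def lam : LieIdeal ℂ f3 :=
  ⁅(LieSubmodule.lieSpan ℂ f3 {x} : LieIdeal ℂ f3),
    (LieSubmodule.lieSpan ℂ f3 {y} : LieIdeal ℂ f3)⁆

/-- The four subspaces `ℂ·z`, `a_x`, `a_y`, `λ` of `f₃`. -/
noncomputable def piece : Fin 4 → Submodule ℂ f3
  | 0 => Submodule.span ℂ {z}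
  | 1 => (aSub x).toSubmodule
  | 2 => (aSub y).toSubmodule
  | 3 => lam.toSubmodule


/-!
Let `FN` be the free Lie algebra on `e₀, e₁, …` and `shift` its derivation `eₖ ↦ eₖ₊₁`. In the
holomorph `FN ⋊ Der FN` the derivation `shift` becomes inner, so `z ↦ shift`, `x ↦ e₀`, `y ↦ 0`
defines a Lie map on `f₃` sending `ad_z^k x` to `eₖ`. Thus `eₖ ↦ ad_z^k x` is injective, and this
map separates `a_x` from the ideal `[y]`, which contains `a_y` and `λ`; symmetrically for `y`.
Together with the `z`-coordinate of the abelianisation, which kills `[x] + [y]`, this peels off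
`ℂ·z`, `a_x`, `a_y` from a vanishing sum one at a time. The four pieces span `f₃` because their sum
is closed under brackets (`ad_z` preserves `a_x` and `a_y`, and `⁅a_x, a_y⁆ ⊆ λ`) and contains the
generators.
-/

open LieAlgebra LieModule.Cohomology FreeLieAlgebra

theorem LieSubalgebra.lie_mem_lieSpan {R L : Type*} [CommRing R] [LieRing L] [LieAlgebra R L]
    {s : Set L} {t : L} (hs : ∀ a ∈ s, ⁅t, a⁆ ∈ lieSpan R L s) {a : L}
    (ha : a ∈ lieSpan R L s) : ⁅t, a⁆ ∈ lieSpan R L s := by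
  induction ha using LieSubalgebra.lieSpan_induction with
  | mem a h => exact hs a h
  | zero => simp
  | add a b _ _ ha hb => simpa using add_mem ha hb
  | smul c a _ ha => simpa using SMulMemClass.smul_mem c ha
  | lie a b ha' hb' ha hb =>
    rw [leibniz_lie]
    exact add_mem (lie_mem _ ha hb') (lie_mem _ ha' hb)

theorem Submodule.lie_mem_of_lie_mem_swap {R L : Type*} [CommRing R] [LieRing L] [LieAlgebra R L]
    {p : Submodule R L} {a b : L} (h : ⁅b, a⁆ ∈ p) : ⁅a, b⁆ ∈ p := by
  rw [← lie_skew]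
  exact p.neg_mem h

theorem LieHom.map_eq_zero_of_mem_lieSpan_singleton {R L L' : Type*} [CommRing R] [LieRing L]
    [LieAlgebra R L] [LieRing L'] [LieAlgebra R L'] (f : L →ₗ⁅R⁆ L') {w a : L} (hw : f w = 0)
    (ha : a ∈ LieSubmodule.lieSpan R L {w}) : f a = 0 :=
  (LieSubmodule.lieSpan_le (N := f.ker)).mpr (by simpa using hw) ha

theorem iSupIndep_of_sum_eq_zero {ι R N : Type*} [Fintype ι] [Ring R] [AddCommGroup N]
    [Module R N] (p : ι → Submodule R N)
    (h : ∀ v : ι → N, (∀ i, v i ∈ p i) → ∑ i, v i = 0 → v = 0) : iSupIndep p := by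
  classical
  rw [iSupIndep_iff_finsetSum_eq_zero_imp_eq_zero]
  intro s v hv hsum i hi
  have := h (fun j => if j ∈ s then v j else 0) (fun j => by split_ifs with hj <;> simp [hv, hj])
    (by rwa [Finset.sum_ite_mem, Finset.univ_inter])
  simpa [hi] using congr_fun this i

namespace FreeLieAlgebra

variable {R X L : Type*} [CommRing R] [LieRing L] [LieAlgebra R L]

theorem lieSpan_range_of :
    LieSubalgebra.lieSpan R (FreeLieAlgebra R X) (Set.range (of R)) = ⊤ := by
  set K := LieSubalgebra.lieSpan R (FreeLieAlgebra R X) (Set.range (of R))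
  let F : FreeLieAlgebra R X →ₗ⁅R⁆ K :=
    lift R fun i => ⟨of R i, LieSubalgebra.subset_lieSpan ⟨i, rfl⟩⟩
  have hF : K.incl.comp F = LieHom.id := hom_ext fun i => by simp [F]
  refine eq_top_iff.mpr fun a _ => ?_
  have h : (F a : FreeLieAlgebra R X) = a := congr($hF a)
  exact h ▸ (F a).2

@[elab_as_elim]
theorem induction_on {p : FreeLieAlgebra R X → Prop} (a : FreeLieAlgebra R X)
    (gen : ∀ i, p (of R i)) (zero : p 0) (add : ∀ a b, p a → p b → p (a + b))
    (smul : ∀ (t : R) a, p a → p (t • a)) (lie : ∀ a b, p a → p b → p ⁅a, b⁆) : p a := by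
  have ha : a ∈ LieSubalgebra.lieSpan R _ (Set.range (FreeLieAlgebra.of R)) := by
    rw [lieSpan_range_of]
    trivial
  induction ha using LieSubalgebra.lieSpan_induction with
  | mem _ h => obtain ⟨i, rfl⟩ := h; exact gen i
  | zero => exact zero
  | add a b _ _ ha hb => exact add a b ha hb
  | smul t a _ ha => exact smul t a ha
  | lie a b _ _ ha hb => exact lie a b ha hb

theorem range_lift (f : X → L) : (lift R f).range = LieSubalgebra.lieSpan R L (Set.range f) := by
  rw [LieHom.range_eq_map, ← lieSpan_range_of, LieSubalgebra.map_lieSpan, ← Set.range_comp,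
    of_comp_lift]

variable {M : Type*} [AddCommGroup M] [Module R M] [LieRingModule (FreeLieAlgebra R X) M]
  [LieModule R (FreeLieAlgebra R X) M]

/-- A derivation into `M` is the second component of a Lie algebra map into `L ⋉ M`, the
extension of `L` by `M` with zero cocycle. -/
noncomputable def liftDerivationAux (v : X → M) :
    FreeLieAlgebra R X →ₗ⁅R⁆ ofTwoCocycle (0 : twoCocycle R (FreeLieAlgebra R X) M) :=
  lift R fun i => ofProd _ (of R i, v i)

theorem liftDerivationAux_fst (v : X → M) (a : FreeLieAlgebra R X) :
    ((ofProd _).symm (liftDerivationAux v a)).1 = a := by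
  induction a using induction_on with
  | gen i => simp [liftDerivationAux]
  | zero => simp
  | add a b ha hb => simp [ha, hb]
  | smul t a ha => simp [ha]
  | lie a b ha hb => simp [bracket_ofTwoCocycle, ha, hb]

noncomputable def liftDerivation (v : X → M) : LieDerivation R (FreeLieAlgebra R X) M where
  toFun a := ((ofProd _).symm (liftDerivationAux v a)).2
  map_add' a b := by simp
  map_smul' t a := by simp
  leibniz' a b := by simp [bracket_ofTwoCocycle, liftDerivationAux_fst]

@[simp]
theorem liftDerivation_of (v : X → M) (i : X) : liftDerivation v (of R i) = v i := by
  simp [liftDerivation, liftDerivationAux]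

end FreeLieAlgebra

theorem adzk_mem {I : LieIdeal ℂ f3} {w : f3} (hw : w ∈ I) (k : ℕ) : adzk k w ∈ I := by
  induction k with
  | zero => exact hw
  | succ k ih => exact I.lie_mem ih

theorem mem_of_mem_aSub {I : LieIdeal ℂ f3} {w a : f3} (hw : w ∈ I) (ha : a ∈ aSub w) :
    a ∈ I := by
  refine (LieSubalgebra.lieSpan_le (K := I.toLieSubalgebra) |>.mpr ?_) ha
  rintro _ ⟨k, rfl⟩
  exact adzk_mem hw k

theorem mem_lieSpan_x_of_mem_aSub {a : f3} (ha : a ∈ aSub x) :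
    a ∈ LieSubmodule.lieSpan ℂ f3 {x} :=
  mem_of_mem_aSub (LieSubmodule.subset_lieSpan rfl) ha

theorem mem_lieSpan_y_of_mem_aSub {a : f3} (ha : a ∈ aSub y) :
    a ∈ LieSubmodule.lieSpan ℂ f3 {y} :=
  mem_of_mem_aSub (LieSubmodule.subset_lieSpan rfl) ha

theorem lie_z_mem_aSub {w a : f3} (ha : a ∈ aSub w) : ⁅z, a⁆ ∈ aSub w := by
  refine LieSubalgebra.lie_mem_lieSpan ?_ ha
  rintro _ ⟨k, rfl⟩
  exact LieSubalgebra.subset_lieSpan ⟨k + 1, rfl⟩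

theorem aSub_eq_range (w : f3) : aSub w = (lift ℂ fun k => adzk k w).range := by
  rw [range_lift, aSub]
  congr
  ext v
  exact exists_congr fun k => eq_comm

noncomputable abbrev FN : Type := FreeLieAlgebra ℂ ℕ

noncomputable def shift : LieDerivation ℂ FN FN := liftDerivation fun k => of ℂ (k + 1)

abbrev Hol : Type := FN ⋊⁅LieHom.id⁆ LieDerivation ℂ FN FN

noncomputable def probe (i : Fin 3) : f3 →ₗ⁅ℂ⁆ Hol :=
  lift ℂ fun j => if j = 2 then ⟨0, shift⟩ else if j = i then ⟨of ℂ 0, 0⟩ else 0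

theorem probe_z (i : Fin 3) : probe i z = ⟨0, shift⟩ := by
  simp [probe, z]

theorem probe_of_self {i : Fin 3} (hi : i ≠ 2) : probe i (of ℂ i) = ⟨of ℂ 0, 0⟩ := by
  simp [probe, hi]

theorem probe_of_of_ne {i j : Fin 3} (hj : j ≠ 2) (hji : j ≠ i) : probe i (of ℂ j) = 0 := by
  simp [probe, hj, hji]

theorem probe_adzk {i : Fin 3} (hi : i ≠ 2) (k : ℕ) :
    probe i (adzk k (of ℂ i)) = SemiDirectSum.inl _ (of ℂ k) := by
  induction k with
  | zero => exact probe_of_self hi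
  | succ k ih => simp [adzk, probe_z, ih, shift]

theorem probe_comp_lift_adzk {i : Fin 3} (hi : i ≠ 2) :
    (probe i).comp (lift ℂ fun k => adzk k (of ℂ i)) = SemiDirectSum.inl _ :=
  hom_ext fun k => by simp [probe_adzk hi]

theorem lift_adzk_injective {i : Fin 3} (hi : i ≠ 2) :
    Function.Injective (lift ℂ fun k => adzk k (of ℂ i)) := by
  have h : Function.Injective ((probe i).comp (lift ℂ fun k => adzk k (of ℂ i))) := by
    rw [probe_comp_lift_adzk hi]
    exact SemiDirectSum.inl_injective _
  exact Function.Injective.of_comp (f := probe i) h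

theorem eq_zero_of_mem_aSub_of_probe_eq_zero {i : Fin 3} (hi : i ≠ 2) {a : f3}
    (ha : a ∈ aSub (of ℂ i)) (h : probe i a = 0) : a = 0 := by
  rw [aSub_eq_range, LieHom.mem_range] at ha
  obtain ⟨u, rfl⟩ := ha
  rw [← LieHom.comp_apply, probe_comp_lift_adzk hi] at h
  rw [SemiDirectSum.inl_injective _ (h.trans (map_zero _).symm), map_zero]

theorem exists_free_onto_aSub {i : Fin 3} (hi : i ≠ 2) :
    ∃ e : FreeLieAlgebra ℂ ℕ →ₗ⁅ℂ⁆ f3, Function.Injective e ∧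
      (∀ v : f3, v ∈ aSub (of ℂ i) ↔ ∃ u, e u = v) ∧ ∀ k : ℕ, e (of ℂ k) = adzk k (of ℂ i) :=
  ⟨_, lift_adzk_injective hi, fun v => by rw [aSub_eq_range, LieHom.mem_range],
    fun k => lift_of_apply _ _⟩

theorem lie_z_mem_piece {b : f3} : ∀ {j : Fin 4}, b ∈ piece j → ⁅z, b⁆ ∈ piece j
  | 0, hb => by
    obtain ⟨c, rfl⟩ := Submodule.mem_span_singleton.mp hb
    simp [piece]
  | 1, hb => lie_z_mem_aSub hb
  | 2, hb => lie_z_mem_aSub hb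
  | 3, hb => lam.lie_mem hb

theorem lie_mem_piece_of_mem_span_z {a b : f3} {j : Fin 4} (ha : a ∈ Submodule.span ℂ {z})
    (hb : b ∈ piece j) : ⁅a, b⁆ ∈ piece j := by
  obtain ⟨c, rfl⟩ := Submodule.mem_span_singleton.mp ha
  rw [smul_lie]
  exact (piece j).smul_mem c (lie_z_mem_piece hb)

theorem exists_lie_mem_piece {a b : f3} :
    ∀ {i j : Fin 4}, a ∈ piece i → b ∈ piece j → ∃ k, ⁅a, b⁆ ∈ piece k
  | 0, j, ha, hb => ⟨j, lie_mem_piece_of_mem_span_z ha hb⟩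
  | 1, 0, ha, hb | 2, 0, ha, hb | 3, 0, ha, hb =>
    ⟨_, Submodule.lie_mem_of_lie_mem_swap (lie_mem_piece_of_mem_span_z hb ha)⟩
  | 1, 3, _, hb | 2, 3, _, hb | 3, 3, _, hb => ⟨3, lam.lie_mem hb⟩
  | 3, 1, ha, _ | 3, 2, ha, _ => ⟨3, Submodule.lie_mem_of_lie_mem_swap (lam.lie_mem ha)⟩
  | 1, 1, ha, hb => ⟨1, (aSub x).lie_mem ha hb⟩
  | 2, 2, ha, hb => ⟨2, (aSub y).lie_mem ha hb⟩
  | 1, 2, ha, hb =>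
    ⟨3, LieSubmodule.lie_mem_lie (mem_lieSpan_x_of_mem_aSub ha) (mem_lieSpan_y_of_mem_aSub hb)⟩
  | 2, 1, ha, hb => ⟨3, Submodule.lie_mem_of_lie_mem_swap <|
    LieSubmodule.lie_mem_lie (mem_lieSpan_x_of_mem_aSub hb) (mem_lieSpan_y_of_mem_aSub ha)⟩

theorem lie_mem_iSup_piece {a b : f3} (ha : a ∈ ⨆ i, piece i) (hb : b ∈ ⨆ i, piece i) :
    ⁅a, b⁆ ∈ ⨆ i, piece i := by
  induction ha using Submodule.iSup_induction' with
  | mem i a ha =>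
    induction hb using Submodule.iSup_induction' with
    | mem j b hb =>
      obtain ⟨k, hk⟩ := exists_lie_mem_piece ha hb
      exact Submodule.mem_iSup_of_mem k hk
    | zero => simp
    | add b b' _ _ hb hb' => simpa using add_mem hb hb'
  | zero => simp
  | add a a' _ _ ha ha' => simpa using add_mem ha ha'

theorem iSup_piece_eq_top : ⨆ i, piece i = ⊤ := by
  let S : LieSubalgebra ℂ f3 := { ⨆ i, piece i with lie_mem' := lie_mem_iSup_piece }
  have hgen : Set.range (of ℂ) ⊆ (S : Set f3) := by
    rintro _ ⟨i, rfl⟩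
    fin_cases i
    · exact Submodule.mem_iSup_of_mem 1 (LieSubalgebra.subset_lieSpan ⟨0, rfl⟩)
    · exact Submodule.mem_iSup_of_mem 2 (LieSubalgebra.subset_lieSpan ⟨0, rfl⟩)
    · exact Submodule.mem_iSup_of_mem 0 (Submodule.mem_span_singleton_self z)
  have hS := LieSubalgebra.lieSpan_le.mpr hgen
  rw [lieSpan_range_of, top_le_iff] at hS
  exact congr_arg LieSubalgebra.toSubmodule hS

section

attribute [local instance 100] LieRing.ofAssociativeRing

noncomputable def zCoord : f3 →ₗ⁅ℂ⁆ ℂ := lift ℂ (Pi.single 2 1)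

theorem zCoord_smul_z (c : ℂ) : zCoord (c • z) = c := by
  simp [zCoord, z]

theorem zCoord_of_ne {i : Fin 3} (hi : i ≠ 2) : zCoord (of ℂ i) = 0 := by
  simp [zCoord, hi]

theorem iSupIndep_piece : iSupIndep piece := by
  refine iSupIndep_of_sum_eq_zero piece fun v hv hsum => ?_
  rw [Fin.sum_univ_four] at hsum
  have hx1 := mem_lieSpan_x_of_mem_aSub (hv 1)
  have hy2 := mem_lieSpan_y_of_mem_aSub (hv 2)
  have hx3 := LieSubmodule.lie_le_left _ _ (hv 3)
  have hy3 := LieSubmodule.lie_le_right _ _ (hv 3)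
  have hzx : zCoord x = 0 := zCoord_of_ne (by decide)
  have hzy : zCoord y = 0 := zCoord_of_ne (by decide)
  have hpy : probe 0 y = 0 := probe_of_of_ne (by decide) (by decide)
  have hpx : probe 1 x = 0 := probe_of_of_ne (by decide) (by decide)
  have h0 : v 0 = 0 := by
    obtain ⟨c, hc⟩ := Submodule.mem_span_singleton.mp (hv 0)
    have h := congr(zCoord $hsum)
    simp only [map_add, ← hc, zCoord_smul_z, zCoord.map_eq_zero_of_mem_lieSpan_singleton hzx hx1,
      zCoord.map_eq_zero_of_mem_lieSpan_singleton hzy hy2,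
      zCoord.map_eq_zero_of_mem_lieSpan_singleton hzx hx3, map_zero, add_zero] at h
    rw [← hc, h, zero_smul]
  have h1 : v 1 = 0 := by
    refine eq_zero_of_mem_aSub_of_probe_eq_zero (i := 0) (by decide) (hv 1) ?_
    have h := congr(probe 0 $hsum)
    simpa only [map_add, map_zero, h0, (probe 0).map_eq_zero_of_mem_lieSpan_singleton hpy hy2,
      (probe 0).map_eq_zero_of_mem_lieSpan_singleton hpy hy3, zero_add, add_zero] using h
  have h2 : v 2 = 0 := by
    refine eq_zero_of_mem_aSub_of_probe_eq_zero (i := 1) (by decide) (hv 2) ?_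
    have h := congr(probe 1 $hsum)
    simpa only [map_add, map_zero, h0, h1, (probe 1).map_eq_zero_of_mem_lieSpan_singleton hpx hx3,
      zero_add, add_zero] using h
  have h3 : v 3 = 0 := by simpa [h0, h1, h2] using hsum
  ext i
  fin_cases i <;> assumption

end

theorem f3_decomposition :
    -- `f₃ = ℂ·z ⊕ a_x ⊕ a_y ⊕ λ` as an internal direct sum of subspaces
    DirectSum.IsInternal piece ∧
    -- `a_x` is free on the generators `ad_z^k (x)`, and similarly for `a_y`
    (∀ w : f3, w = x ∨ w = y →
      ∃ e : FreeLieAlgebra ℂ ℕ →ₗ⁅ℂ⁆ f3,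
        Function.Injective e ∧ (∀ v : f3, v ∈ aSub w ↔ ∃ u, e u = v) ∧
          ∀ k : ℕ, e (FreeLieAlgebra.of ℂ k) = adzk k w) := by
  refine ⟨(DirectSum.isInternal_submodule_iff_iSupIndep_and_iSup_eq_top piece).mpr
    ⟨iSupIndep_piece, iSup_piece_eq_top⟩, ?_⟩
  rintro w (rfl | rfl)
  exacts [exists_free_onto_aSub (i := 0) (by decide), exists_free_onto_aSub (i := 1) (by decide)]
end

section
/- With the notation below, for integers s, t ≥ 1 and k₁,…,k_s, l₁,…,l_t ≥ 0 consider the iterated brackets w := [[…[[ad_z^{k₁}(y), […,[ad_z^{k_{s−1}}(y), [ad_z^{k_s}(y), ad_z^{l₁}(x)]]…]], ad_z^{l₂}(x)], …], ad_z^{l_t}(x)] ∈ f₃ (first bracketing the y-terms from the right towards the left against [ad_z^{k_s}(y), ad_z^{l₁}(x)], then bracketing the remaining x-terms from the left towards the right). The images of these elements w under the composite f₃ → U f₃ → U f₃ / I₅ form a basis of the bidegree-≥(1,1) part of U f₃ / I₅, i.e. of the span of the images of all monomials in x, y, z containing at least one x and at least one y. -/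
abbrev Uf3 : Type := UniversalEnvelopingAlgebra ℂ f3

attribute [local instance] LieRing.ofAssociativeRing

noncomputable def ι : f3 →ₗ⁅ℂ⁆ Uf3 := UniversalEnvelopingAlgebra.ι ℂ

/-- The monomial in `U f₃` given by a word in the letters `x, y, z`. -/
noncomputable def monomial (l : List (Fin 3)) : Uf3 :=
  (l.map fun i => ι (FreeLieAlgebra.of ℂ i)).prod

/-- The two-sided ideal of `U f₃` generated by `ι w`, as a `ℂ`-subspace. -/
noncomputable def twoSided (w : f3) : Submodule ℂ Uf3 :=
  Submodule.span ℂ {u : Uf3 | ∃ a b : Uf3, u = a * ι w * b}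

/-- The left ideal `I₅ := (x)(y) + (U f₃)·z`. -/
noncomputable def I5 : Submodule ℂ Uf3 :=
  twoSided x * twoSided y + Submodule.span ℂ {u : Uf3 | ∃ a : Uf3, u = a * ι z}

/-- The bidegree-`≥(1,1)` part of `U f₃ / I₅`: the span of the images of all monomials
containing at least one `x` and at least one `y`. -/
noncomputable def M11 : Submodule ℂ (Uf3 ⧸ I5) :=
  Submodule.span ℂ
    {u : Uf3 ⧸ I5 | ∃ l : List (Fin 3), (0 : Fin 3) ∈ l ∧ (1 : Fin 3) ∈ l ∧
      u = Submodule.Quotient.mk (monomial l)}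

/-- Index type: the exponent data `((k₁,…,k_{s−1}), k_s, l₁, (l₂,…,l_t))`, encoding
arbitrary sequences `k₁,…,k_s` and `l₁,…,l_t` with `s, t ≥ 1`. -/
abbrev Idx : Type := List ℕ × ℕ × ℕ × List ℕ

/-- The iterated bracket
`[[…[[ad_z^{k₁}(y),[…,[ad_z^{k_{s−1}}(y),[ad_z^{k_s}(y), ad_z^{l₁}(x)]]…]], ad_z^{l₂}(x)],…], ad_z^{l_t}(x)]`:
first the `y`-terms are bracketed from the right towards the left against
`[ad_z^{k_s}(y), ad_z^{l₁}(x)]`, then the remaining `x`-terms from the left towards the right. -/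
noncomputable def bracketElt (p : Idx) : f3 :=
  p.2.2.2.foldl (fun acc li => ⁅acc, adzk li x⁆)
    (p.1.foldr (fun ki acc => ⁅adzk ki y, acc⁆) ⁅adzk p.2.1 y, adzk p.2.2.1 x⁆)

/-!
Identify `U f₃` with the free associative algebra, whose basis is the set of words in `x, y, z`.
Among words of a fixed multidegree, measure a word by its `z`-weight, the number of pairs formed
by an occurrence of `z` and a later occurrence of `x` or `y`. Expanding the brackets, the image
of the bracket indexed by `(k, l)` is its leading word `z^{k₁}y ⋯ z^{k_s}y z^{l₁}x ⋯ z^{l_t}x`,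
plus words of the same multidegree and smaller `z`-weight, plus words with an `x` before a `y`.
The words with an `x` before a `y` or a final `z` span `I₅`, and the leading words are exactly
the words containing `x` and `y` that are of neither kind. So the images of the brackets are
unitriangular with respect to the coefficients of the leading words, which gives linear
independence, and induction on the `z`-weight writes every monomial containing `x` and `y`
through them, which gives spanning.
-/section WordSpan

open Submodule

variable (R : Type*) [CommSemiring R] {α : Type*}

noncomputable def word (w : List α) : MonoidAlgebra R (FreeMonoid α) :=
  MonoidAlgebra.single (FreeMonoid.ofList w) 1

noncomputable def wordSpan (P : List α → Prop) : Submodule R (MonoidAlgebra R (FreeMonoid α)) :=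
  span R (word R '' {w | P w})

noncomputable def wordCoeff (w : List α) : MonoidAlgebra R (FreeMonoid α) →ₗ[R] R :=
  (MonoidAlgebra.basis (FreeMonoid α) R).coord (FreeMonoid.ofList w)

variable {R}

lemma word_eq_basis (w : List α) :
    word R w = MonoidAlgebra.basis (FreeMonoid α) R (FreeMonoid.ofList w) :=
  (MonoidAlgebra.basis_apply R _).symm

lemma word_mul_word (u v : List α) : word R u * word R v = word R (u ++ v) := by
  rw [word, word, word, MonoidAlgebra.single_mul_single, one_mul, FreeMonoid.ofList_append]

lemma word_mem_wordSpan {P : List α → Prop} {w : List α} (h : P w) : word R w ∈ wordSpan R P :=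
  subset_span ⟨w, h, rfl⟩

lemma wordSpan_mono {P Q : List α → Prop} (h : ∀ w, P w → Q w) : wordSpan R P ≤ wordSpan R Q :=
  span_mono (Set.image_mono h)

lemma wordSpan_true : wordSpan R (fun _ : List α => True) = ⊤ := by
  have : word R = MonoidAlgebra.basis (FreeMonoid α) R ∘ FreeMonoid.ofList := funext word_eq_basis
  rw [wordSpan, Set.ofPred_true, Set.image_univ, this, Set.range_comp,
    FreeMonoid.ofList.surjective.range_eq, Set.image_univ, Module.Basis.span_eq]

lemma mem_wordSpan_true (m : MonoidAlgebra R (FreeMonoid α)) : m ∈ wordSpan R fun _ => True :=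
  wordSpan_true (R := R) ▸ mem_top

lemma mul_mem_wordSpan {P Q S : List α → Prop} (h : ∀ u v, P u → Q v → S (u ++ v))
    {a b : MonoidAlgebra R (FreeMonoid α)} (ha : a ∈ wordSpan R P) (hb : b ∈ wordSpan R Q) :
    a * b ∈ wordSpan R S := by
  have : wordSpan R P * wordSpan R Q ≤ wordSpan R S := by
    rw [wordSpan, wordSpan, span_mul_span]
    refine span_le.mpr ?_
    rintro _ ⟨_, ⟨u, hu, rfl⟩, _, ⟨v, hv, rfl⟩, rfl⟩
    change word R u * word R v ∈ wordSpan R S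
    rw [word_mul_word]
    exact word_mem_wordSpan (h u v hu hv)
  exact this (mul_mem_mul ha hb)

lemma wordCoeff_word_self (w : List α) : wordCoeff R w (word R w) = 1 := by
  rw [word_eq_basis, wordCoeff, Module.Basis.coord_apply, Module.Basis.repr_self,
    Finsupp.single_eq_same]

lemma wordCoeff_word_of_ne {w w' : List α} (h : w' ≠ w) : wordCoeff R w (word R w') = 0 := by
  rw [word_eq_basis, wordCoeff, Module.Basis.coord_apply, Module.Basis.repr_self,
    Finsupp.single_eq_of_ne (FreeMonoid.ofList.injective.ne h.symm)]

lemma wordCoeff_eq_zero_of_mem_wordSpan {P : List α → Prop} {w : List α} (hw : ¬ P w)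
    {m : MonoidAlgebra R (FreeMonoid α)} (hm : m ∈ wordSpan R P) : wordCoeff R w m = 0 := by
  refine (span_le (p := LinearMap.ker (wordCoeff R w)).mpr ?_) hm
  rintro _ ⟨w', hw', rfl⟩
  exact wordCoeff_word_of_ne fun h => hw (h ▸ hw')

end WordSpan

theorem linearIndependent_of_triangular {ι κ R M : Type*} [LinearOrder κ] [Ring R]
    [AddCommGroup M] [Module R M] (μ : ι → κ) {v : ι → M} (f : ι → M →ₗ[R] R)
    (hdiag : ∀ i, f i (v i) = 1) (hlower : ∀ i j, μ j ≤ μ i → j ≠ i → f i (v j) = 0) :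
    LinearIndependent R v := by
  classical
  rw [linearIndependent_iff']
  intro s
  induction s using Finset.induction_on_max_value μ with
  | empty => simp
  | insert a s has hmax ih =>
    intro g hsum
    have hga : g a = 0 := by
      have := congrArg (f a) hsum
      rwa [map_sum, Finset.sum_insert has, Finset.sum_eq_zero fun j hj => by
        rw [map_smul, hlower a j (hmax j hj) (ne_of_mem_of_not_mem hj has), smul_zero],
        map_smul, hdiag, smul_eq_mul, mul_one, add_zero, map_zero] at this
    rw [Finset.sum_insert has, hga, zero_smul, zero_add] at hsum
    intro i hi
    rcases Finset.mem_insert.mp hi with rfl | hi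
    · exact hga
    · exact ih g hsum i hi

lemma List.append_cons_inj_of_notMem_left {α : Type*} {a : α} {x₁ x₂ z₁ z₂ : List α}
    (h₁ : a ∉ x₁) (h₂ : a ∉ x₂) (h : x₁ ++ a :: z₁ = x₂ ++ a :: z₂) : x₁ = x₂ ∧ z₁ = z₂ := by
  induction x₁ generalizing x₂ with
  | nil =>
    cases x₂ with
    | nil => exact ⟨rfl, List.cons_injective h⟩
    | cons c x₂ =>
      simp only [List.nil_append, List.cons_append, List.cons.injEq] at h
      exact absurd (by simp [h.1]) h₂
  | cons b x₁ ih =>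
    cases x₂ with
    | nil =>
      simp only [List.nil_append, List.cons_append, List.cons.injEq] at h
      exact absurd (by simp [h.1]) h₁
    | cons c x₂ =>
      simp only [List.cons_append, List.cons.injEq] at h
      simp only [List.mem_cons, not_or] at h₁ h₂
      obtain ⟨rfl, h⟩ := h
      exact (ih h₁.2 h₂.2 h).imp_left (congrArg _)

open Submodule

-- The letters `0, 1, 2` stand for `x, y, z`.
abbrev Word : Type := List (Fin 3)

def zPow (n : ℕ) : Word := List.replicate n 2

@[simp] lemma zPow_zero : zPow 0 = [] := rfl

lemma zPow_succ (n : ℕ) : zPow (n + 1) = zPow n ++ [2] := List.replicate_succ' ..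

lemma zPow_add (m n : ℕ) : zPow (m + n) = zPow m ++ zPow n := List.replicate_add ..

lemma eq_two_of_mem_zPow {a : Fin 3} {n : ℕ} (h : a ∈ zPow n) : a = 2 := List.eq_of_mem_replicate h

def nonZCount (w : Word) : ℕ := w.countP (· ≠ 2)

def zWeight : Word → ℕ
  | [] => 0
  | a :: w => (if a = 2 then nonZCount w else 0) + zWeight w

lemma zWeight_append (u v : Word) :
    zWeight (u ++ v) = zWeight u + u.count 2 * nonZCount v + zWeight v := by
  induction u with
  | nil => simp [zWeight]
  | cons a u ih =>
    by_cases ha : a = 2 <;> simp [zWeight, ha, ih, nonZCount]; ring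

def WordLE (w c : Word) : Prop := w.Perm c ∧ zWeight w ≤ zWeight c

def WordLT (w c : Word) : Prop := w.Perm c ∧ zWeight w < zWeight c

lemma WordLE.refl (c : Word) : WordLE c c := ⟨List.Perm.refl c, le_rfl⟩

lemma WordLT.wordLE {w c : Word} (h : WordLT w c) : WordLE w c := ⟨h.1, h.2.le⟩

lemma WordLT.trans_wordLE {w c d : Word} (h : WordLT w c) (h' : WordLE c d) : WordLT w d :=
  ⟨h.1.trans h'.1, h.2.trans_le h'.2⟩

lemma zWeight_append_add_of_perm {u u' v v' : Word} (hu : u.Perm u') (hv : v.Perm v') :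
    zWeight (u ++ v) + (zWeight u' + zWeight v') =
      zWeight (u' ++ v') + (zWeight u + zWeight v) := by
  rw [zWeight_append, zWeight_append, hu.count_eq, nonZCount, nonZCount, hv.countP_eq]
  ring

lemma WordLE.append_wordLT {u u' v v' : Word} (hu : WordLE u u') (hv : WordLT v v') :
    WordLT (u ++ v) (u' ++ v') :=
  ⟨hu.1.append hv.1, by linarith [zWeight_append_add_of_perm hu.1 hv.1, hu.2, hv.2]⟩

lemma WordLT.append_wordLE {u u' v v' : Word} (hu : WordLT u u') (hv : WordLE v v') :
    WordLT (u ++ v) (u' ++ v') :=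
  ⟨hu.1.append hv.1, by linarith [zWeight_append_add_of_perm hu.1 hv.1, hu.2, hv.2]⟩

lemma wordLT_append_z {c : Word} (h : ∃ a ∈ c, a ≠ 2) : WordLT (c ++ [2]) (2 :: c) :=
  ⟨List.perm_append_singleton 2 c, by simp [zWeight_append, zWeight, nonZCount, h]⟩

def XBeforeY (w : Word) : Prop := ∃ u v, w = u ++ v ∧ 0 ∈ u ∧ 1 ∈ v

def EndsWithZ (w : Word) : Prop := ∃ u, w = u ++ [2]

lemma xBeforeY_append {u v : Word} (h0 : 0 ∈ u) (h1 : 1 ∈ v) : XBeforeY (u ++ v) :=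
  ⟨u, v, rfl, h0, h1⟩

lemma XBeforeY.append_right {w : Word} (h : XBeforeY w) (r : Word) : XBeforeY (w ++ r) := by
  obtain ⟨u, v, rfl, h0, h1⟩ := h
  exact ⟨u, v ++ r, by simp, h0, by simp [h1]⟩

lemma XBeforeY.append_left {w : Word} (h : XBeforeY w) (r : Word) : XBeforeY (r ++ w) := by
  obtain ⟨u, v, rfl, h0, h1⟩ := h
  exact ⟨r ++ u, v, by simp, by simp [h0], h1⟩

lemma XBeforeY.zero_mem {w : Word} (h : XBeforeY w) : 0 ∈ w := by
  obtain ⟨u, v, rfl, h0, -⟩ := h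
  exact List.mem_append_left v h0

lemma XBeforeY.one_mem {w : Word} (h : XBeforeY w) : 1 ∈ w := by
  obtain ⟨u, v, rfl, -, h1⟩ := h
  exact List.mem_append_right u h1

lemma not_xBeforeY_iff {w : Word} : ¬ XBeforeY w ↔ ∃ u v, w = u ++ v ∧ 0 ∉ u ∧ 1 ∉ v := by
  constructor
  · intro h
    induction w with
    | nil => exact ⟨[], [], rfl, by simp, by simp⟩
    | cons a w ih =>
      by_cases ha : a = 0
      · refine ⟨[], a :: w, rfl, by simp, fun h1 => h ⟨[a], w, rfl, by simp [ha], ?_⟩⟩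
        simpa [ha] using h1
      · obtain ⟨u, v, rfl, hu, hv⟩ := ih fun h' => h (h'.append_left [a])
        exact ⟨a :: u, v, rfl, by simp [hu, Ne.symm ha], hv⟩
  · rintro ⟨u, v, rfl, hu, hv⟩ ⟨u', v', h, h0, h1⟩
    rcases List.append_eq_append_iff.mp h with ⟨m, rfl, rfl⟩ | ⟨m, rfl, rfl⟩
    · exact hv (List.mem_append_right m h1)
    · exact hu (List.mem_append_left m h0)

lemma zPow_append_cons_inj {i : Fin 3} (hi : i ≠ 2) {k k' : ℕ} {s s' : Word}
    (h : zPow k ++ i :: s = zPow k' ++ i :: s') : k = k' ∧ s = s' := by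
  have hz : ∀ n, i ∉ zPow n := fun n hn => hi (eq_two_of_mem_zPow hn)
  obtain ⟨hk, hs⟩ := List.append_cons_inj_of_notMem_left (hz k) (hz k') h
  exact ⟨List.replicate_left_inj.mp hk, hs⟩

def blocks (i : Fin 3) (A : List ℕ) : Word := A.flatMap fun k => zPow k ++ [i]

section Blocks

variable {i : Fin 3}

@[simp] lemma blocks_nil : blocks i [] = [] := rfl

lemma blocks_cons (k : ℕ) (A : List ℕ) : blocks i (k :: A) = zPow k ++ i :: blocks i A := by
  simp [blocks]

lemma blocks_append (A B : List ℕ) : blocks i (A ++ B) = blocks i A ++ blocks i B :=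
  List.flatMap_append

lemma eq_or_eq_of_mem_blocks {a : Fin 3} {A : List ℕ} (h : a ∈ blocks i A) : a = i ∨ a = 2 := by
  simp only [blocks, zPow, List.mem_flatMap, List.mem_append, List.mem_replicate,
    List.mem_singleton] at h
  obtain ⟨_, -, ⟨-, h⟩ | h⟩ := h
  exacts [Or.inr h, Or.inl h]

lemma getLast?_blocks_cons (k : ℕ) (A : List ℕ) : (blocks i (k :: A)).getLast? = some i := by
  cases A with
  | nil => simp [blocks]
  | cons k' A =>
    rw [blocks_cons, ← List.singleton_append, ← List.append_assoc, List.getLast?_append,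
      getLast?_blocks_cons]
    rfl

lemma exists_eq_blocks_append_zPow {u : Word} (h : ∀ a ∈ u, a = i ∨ a = 2) :
    ∃ A n, u = blocks i A ++ zPow n := by
  induction u with
  | nil => exact ⟨[], 0, rfl⟩
  | cons a u ih =>
    obtain ⟨A, n, rfl⟩ := ih fun b hb => h b (List.mem_cons_of_mem a hb)
    rcases h a List.mem_cons_self with rfl | rfl
    · exact ⟨0 :: A, n, by simp [blocks_cons, zPow]⟩
    · cases A with
      | nil => exact ⟨[], n + 1, rfl⟩
      | cons k A => exact ⟨(k + 1) :: A, n, by simp [blocks_cons, zPow, List.replicate_succ]⟩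

lemma blocks_append_zPow_inj (hi : i ≠ 2) {A A' : List ℕ} {n n' : ℕ}
    (h : blocks i A ++ zPow n = blocks i A' ++ zPow n') : A = A' ∧ n = n' := by
  have hz : ∀ m, i ∉ zPow m := fun m hm => hi (eq_two_of_mem_zPow hm)
  induction A generalizing A' with
  | nil =>
    cases A' with
    | nil => exact ⟨rfl, List.replicate_left_inj.mp h⟩
    | cons k' A' =>
      rw [blocks_nil, List.nil_append] at h
      exact absurd (h ▸ by simp [blocks_cons]) (hz n)
  | cons k A ih =>
    cases A' with
    | nil =>
      rw [blocks_nil, List.nil_append] at h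
      exact absurd (h ▸ by simp [blocks_cons]) (hz n')
    | cons k' A' =>
      simp only [blocks_cons, List.append_assoc, List.cons_append] at h
      obtain ⟨rfl, hrest⟩ := zPow_append_cons_inj hi h
      obtain ⟨rfl, rfl⟩ := ih hrest
      exact ⟨rfl, rfl⟩

end Blocks

def leadingWord (p : Idx) : Word := blocks 1 (p.1 ++ [p.2.1]) ++ blocks 0 (p.2.2.1 :: p.2.2.2)

lemma zero_mem_leadingWord (p : Idx) : 0 ∈ leadingWord p := by
  simp [leadingWord, blocks_cons]

lemma one_mem_leadingWord (p : Idx) : 1 ∈ leadingWord p := by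
  simp [leadingWord, blocks_append, blocks_cons]

lemma not_xBeforeY_leadingWord (p : Idx) : ¬ XBeforeY (leadingWord p) :=
  not_xBeforeY_iff.mpr ⟨_, _, rfl, fun h => by simpa using eq_or_eq_of_mem_blocks h,
    fun h => by simpa using eq_or_eq_of_mem_blocks h⟩

lemma not_endsWithZ_leadingWord (p : Idx) : ¬ EndsWithZ (leadingWord p) := by
  rintro ⟨u, hu⟩
  have := congrArg List.getLast? hu
  rw [leadingWord, List.getLast?_append, getLast?_blocks_cons] at this
  simp at this

lemma leadingWord_injective : Function.Injective leadingWord := by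
  rintro ⟨ks, k, l, ls⟩ ⟨ks', k', l', ls'⟩ h
  simp only [leadingWord, blocks_cons, ← List.append_assoc] at h
  have h0 : ∀ A n, (0 : Fin 3) ∉ blocks 1 A ++ zPow n := fun A n h => by
    rcases List.mem_append.mp h with h | h
    · simpa using eq_or_eq_of_mem_blocks h
    · exact absurd (eq_two_of_mem_zPow h) (by decide)
  obtain ⟨hy, hx⟩ := List.append_cons_inj_of_notMem_left (h0 _ _) (h0 _ _) h
  obtain ⟨hA, rfl⟩ := blocks_append_zPow_inj (by decide) hy
  obtain ⟨rfl, ⟨⟩⟩ := List.append_inj' hA rfl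
  obtain ⟨rfl, -⟩ := blocks_append_zPow_inj (i := 0) (n := 0) (n' := 0) (by decide)
    (by simpa using hx)
  rfl

lemma exists_leadingWord_eq {w : Word} (h0 : 0 ∈ w) (h1 : 1 ∈ w) (hxy : ¬ XBeforeY w)
    (hz : ¬ EndsWithZ w) : ∃ p, leadingWord p = w := by
  obtain ⟨u, v, rfl, hu, hv⟩ := not_xBeforeY_iff.mp hxy
  obtain ⟨A, n, rfl⟩ := exists_eq_blocks_append_zPow (i := 1) (u := u) fun a ha => by
    have : a ≠ 0 := fun h => hu (h ▸ ha)
    omega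
  obtain ⟨B, m, rfl⟩ := exists_eq_blocks_append_zPow (i := 0) (u := v) fun a ha => by
    have : a ≠ 1 := fun h => hv (h ▸ ha)
    omega
  obtain rfl : m = 0 := by
    cases m with
    | zero => rfl
    | succ m => exact absurd ⟨_, by rw [zPow_succ, ← List.append_assoc, ← List.append_assoc]⟩ hz
  obtain ⟨A, k, rfl⟩ : ∃ A₀ k, A = A₀ ++ [k] := by
    rcases List.eq_nil_or_concat' A with rfl | h
    · rcases List.mem_append.mp h1 with h | h
      · simp [zPow] at h
      · exact absurd h hv
    · exact h
  obtain ⟨l, B, rfl⟩ : ∃ l B₀, B = l :: B₀ := by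
    cases B with
    | nil => exact absurd (by simpa [zPow] using h0) hu
    | cons l B => exact ⟨l, B, rfl⟩
  exact ⟨(A, k, n + l, B), by simp [leadingWord, blocks_cons, zPow_add]⟩

abbrev WordAlgebra : Type := MonoidAlgebra ℂ (FreeMonoid (Fin 3))

noncomputable def toWords : Uf3 ≃ₐ[ℂ] WordAlgebra :=
  (FreeLieAlgebra.universalEnvelopingEquivFreeAlgebra ℂ (Fin 3)).trans
    FreeAlgebra.equivMonoidAlgebraFreeMonoid

lemma toWords_ι_of (i : Fin 3) : toWords (ι (FreeLieAlgebra.of ℂ i)) = word ℂ [i] := by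
  simp [toWords, ι, word, FreeAlgebra.equivMonoidAlgebraFreeMonoid, MonoidAlgebra.of_apply]

lemma monomial_append (u v : Word) : monomial (u ++ v) = monomial u * monomial v := by
  simp [monomial]

lemma toWords_monomial (w : Word) : toWords (monomial w) = word ℂ w := by
  induction w with
  | nil => simp [monomial, word]; rfl
  | cons a w ih =>
    rw [← List.singleton_append, monomial_append, map_mul, ih, ← word_mul_word, ← toWords_ι_of]
    simp [monomial]

lemma ι_lie (u v : f3) : ι ⁅u, v⁆ = ι u * ι v - ι v * ι u := by
  rw [LieHom.map_lie]
  rfl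

noncomputable def ltSpan (c : Word) : Submodule ℂ WordAlgebra :=
  wordSpan ℂ fun w => WordLT w c ∨ XBeforeY w

noncomputable def leSpan (c : Word) : Submodule ℂ WordAlgebra :=
  wordSpan ℂ fun w => WordLE w c ∨ XBeforeY w

lemma word_mem_leSpan (c : Word) : word ℂ c ∈ leSpan c :=
  word_mem_wordSpan (Or.inl (WordLE.refl c))

lemma ltSpan_le_leSpan (c : Word) : ltSpan c ≤ leSpan c :=
  wordSpan_mono fun _ => Or.imp_left WordLT.wordLE

lemma ltSpan_mono {c d : Word} (h : WordLE c d) : ltSpan c ≤ ltSpan d :=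
  wordSpan_mono fun _ => Or.imp_left (WordLT.trans_wordLE · h)

lemma mul_mem_ltSpan_of_leSpan_of_ltSpan {c c' : Word} {a b : WordAlgebra} (ha : a ∈ leSpan c)
    (hb : b ∈ ltSpan c') : a * b ∈ ltSpan (c ++ c') := by
  refine mul_mem_wordSpan (fun u v hu hv => ?_) ha hb
  rcases hu with hu | hu
  · exact hv.imp hu.append_wordLT (XBeforeY.append_left · u)
  · exact Or.inr (hu.append_right v)

lemma mul_mem_ltSpan_of_ltSpan_of_leSpan {c c' : Word} {a b : WordAlgebra} (ha : a ∈ ltSpan c)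
    (hb : b ∈ leSpan c') : a * b ∈ ltSpan (c ++ c') := by
  refine mul_mem_wordSpan (fun u v hu hv => ?_) ha hb
  rcases hv with hv | hv
  · exact hu.imp (·.append_wordLE hv) (XBeforeY.append_right · v)
  · exact Or.inr (hv.append_left u)

lemma mul_mem_ltSpan_of_zero_mem_of_one_mem {c c' : Word} (hx : 0 ∈ c) (hy : 1 ∈ c')
    {a b : WordAlgebra} (ha : a ∈ leSpan c) (hb : b ∈ leSpan c') (d : Word) :
    a * b ∈ ltSpan d := by
  refine mul_mem_wordSpan (fun u v hu hv => Or.inr ?_) ha hb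
  rcases hu with hu | hu
  · rcases hv with hv | hv
    · exact xBeforeY_append (hu.1.mem_iff.mpr hx) (hv.1.mem_iff.mpr hy)
    · exact hv.append_left u
  · exact hu.append_right v

def HasLeadingWord (g : f3) (c : Word) : Prop := toWords (ι g) - word ℂ c ∈ ltSpan c

lemma HasLeadingWord.mem_leSpan {g : f3} {c : Word} (h : HasLeadingWord g c) :
    toWords (ι g) ∈ leSpan c := by
  simpa using add_mem (ltSpan_le_leSpan c h) (word_mem_leSpan c)

lemma HasLeadingWord.lie {g h : f3} {c c' : Word} (hg : HasLeadingWord g c)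
    (hh : HasLeadingWord h c') (hy : 1 ∈ c) (hx : 0 ∈ c') : HasLeadingWord ⁅g, h⁆ (c ++ c') := by
  have key : toWords (ι ⁅g, h⁆) - word ℂ (c ++ c') =
      word ℂ c * (toWords (ι h) - word ℂ c') + (toWords (ι g) - word ℂ c) * toWords (ι h) -
        toWords (ι h) * toWords (ι g) := by
    rw [ι_lie, map_sub, map_mul, map_mul, ← word_mul_word]
    noncomm_ring
  rw [HasLeadingWord, key]
  exact sub_mem (add_mem (mul_mem_ltSpan_of_leSpan_of_ltSpan (word_mem_leSpan c) hh)
    (mul_mem_ltSpan_of_ltSpan_of_leSpan hg hh.mem_leSpan))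
    (mul_mem_ltSpan_of_zero_mem_of_one_mem hx hy hh.mem_leSpan hg.mem_leSpan _)

lemma hasLeadingWord_adzk {i : Fin 3} (hi : i ≠ 2) (k : ℕ) :
    HasLeadingWord (adzk k (FreeLieAlgebra.of ℂ i)) (zPow k ++ [i]) := by
  induction k with
  | zero => simp [HasLeadingWord, adzk, toWords_ι_of]
  | succ k ih =>
    set c := zPow k ++ [i]
    have hc : WordLT (c ++ [2]) (2 :: c) := wordLT_append_z ⟨i, by simp [c], hi⟩
    rw [show zPow (k + 1) ++ [i] = [2] ++ c from rfl, HasLeadingWord]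
    have key : toWords (ι (adzk (k + 1) (FreeLieAlgebra.of ℂ i))) - word ℂ ([2] ++ c) =
        word ℂ [2] * (toWords (ι (adzk k (FreeLieAlgebra.of ℂ i))) - word ℂ c) -
          (toWords (ι (adzk k (FreeLieAlgebra.of ℂ i))) - word ℂ c) * word ℂ [2] -
          word ℂ (c ++ [2]) := by
      rw [adzk, ι_lie, map_sub, map_mul, map_mul, z, toWords_ι_of, ← word_mul_word c,
        ← word_mul_word]
      noncomm_ring
    rw [key]
    exact sub_mem (sub_mem (mul_mem_ltSpan_of_leSpan_of_ltSpan (word_mem_leSpan [2]) ih)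
      (ltSpan_mono hc.wordLE (mul_mem_ltSpan_of_ltSpan_of_leSpan ih (word_mem_leSpan [2]))))
      (word_mem_wordSpan (Or.inl hc))

lemma hasLeadingWord_adzk_x (l : ℕ) : HasLeadingWord (adzk l x) (zPow l ++ [0]) :=
  hasLeadingWord_adzk (by decide) l

lemma hasLeadingWord_adzk_y (k : ℕ) : HasLeadingWord (adzk k y) (zPow k ++ [1]) :=
  hasLeadingWord_adzk (by decide) k

lemma HasLeadingWord.foldr_lie_adzk_y {g : f3} {c : Word} (hg : HasLeadingWord g c) (hx : 0 ∈ c)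
    (ks : List ℕ) :
    HasLeadingWord (ks.foldr (fun k acc => ⁅adzk k y, acc⁆) g) (blocks 1 ks ++ c) := by
  induction ks with
  | nil => simpa using hg
  | cons k ks ih =>
    simpa [blocks_cons] using
      (hasLeadingWord_adzk_y k).lie ih (by simp) (by simp [hx])

lemma HasLeadingWord.foldl_lie_adzk_x {g : f3} {c : Word} (hg : HasLeadingWord g c) (hy : 1 ∈ c)
    (ls : List ℕ) :
    HasLeadingWord (ls.foldl (fun acc l => ⁅acc, adzk l x⁆) g) (c ++ blocks 0 ls) := by
  induction ls generalizing g c with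
  | nil => simpa using hg
  | cons l ls ih =>
    simpa [blocks_cons] using
      ih (hg.lie (hasLeadingWord_adzk_x l) hy (by simp)) (by simp [hy])

lemma hasLeadingWord_bracketElt (p : Idx) : HasLeadingWord (bracketElt p) (leadingWord p) := by
  obtain ⟨ks, k, l, ls⟩ := p
  have hyx := (hasLeadingWord_adzk_y k).lie (hasLeadingWord_adzk_x l) (by simp) (by simp)
  simpa [leadingWord, bracketElt, blocks_append, blocks_cons] using
    ((hyx.foldr_lie_adzk_y (by simp) ks).foldl_lie_adzk_x (by simp) ls)

lemma monomial_mem_twoSided {i : Fin 3} {w : Word} (h : i ∈ w) :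
    monomial w ∈ twoSided (FreeLieAlgebra.of ℂ i) := by
  obtain ⟨s, t, rfl⟩ := List.append_of_mem h
  exact subset_span ⟨monomial s, monomial t, by
    rw [← List.singleton_append, monomial_append, monomial_append]
    simp [monomial, mul_assoc]⟩

lemma monomial_mem_I5 {w : Word} (h : XBeforeY w ∨ EndsWithZ w) : monomial w ∈ I5 := by
  rcases h with ⟨u, v, rfl, hu, hv⟩ | ⟨u, rfl⟩
  · rw [monomial_append]
    exact mem_sup_left (mul_mem_mul (monomial_mem_twoSided hu) (monomial_mem_twoSided hv))
  · rw [monomial_append]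
    exact mem_sup_right (subset_span ⟨monomial u, by simp [monomial, z]⟩)

lemma toWords_mem_of_mem_twoSided {i : Fin 3} {u : Uf3}
    (hu : u ∈ twoSided (FreeLieAlgebra.of ℂ i)) : toWords u ∈ wordSpan ℂ fun w : Word => i ∈ w := by
  refine (span_le (p := (wordSpan ℂ fun w : Word => i ∈ w).comap toWords.toLinearMap).mpr ?_) hu
  rintro _ ⟨a, b, rfl⟩
  simp only [SetLike.mem_coe, mem_comap, AlgEquiv.toLinearMap_apply, map_mul, toWords_ι_of]
  refine mul_mem_wordSpan (fun u v hu _ => List.mem_append_left v hu)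
    (mul_mem_wordSpan (fun u v _ hv => List.mem_append_right u hv) (mem_wordSpan_true _)
      (word_mem_wordSpan (List.mem_singleton_self i))) (mem_wordSpan_true _)

lemma toWords_mem_of_mem_I5 {u : Uf3} (hu : u ∈ I5) :
    toWords u ∈ wordSpan ℂ fun w => XBeforeY w ∨ EndsWithZ w := by
  suffices I5 ≤ (wordSpan ℂ fun w => XBeforeY w ∨ EndsWithZ w).comap toWords.toLinearMap from
    this hu
  refine sup_le (mul_le.mpr fun a ha b hb => ?_) (span_le.mpr ?_)
  · simp only [mem_comap, AlgEquiv.toLinearMap_apply, map_mul]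
    exact mul_mem_wordSpan (fun u v hu hv => Or.inl (xBeforeY_append hu hv))
      (toWords_mem_of_mem_twoSided ha) (toWords_mem_of_mem_twoSided hb)
  · rintro _ ⟨a, rfl⟩
    simp only [SetLike.mem_coe, mem_comap, AlgEquiv.toLinearMap_apply, map_mul, z, toWords_ι_of]
    exact mul_mem_wordSpan (S := fun w => XBeforeY w ∨ EndsWithZ w)
      (fun u v _ hv => Or.inr ⟨u, by rw [hv]⟩) (mem_wordSpan_true _)
      (word_mem_wordSpan (P := fun w => w = [2]) rfl)

noncomputable def toQuotient : WordAlgebra →ₗ[ℂ] Uf3 ⧸ I5 :=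
  I5.mkQ ∘ₗ toWords.symm.toLinearMap

lemma toQuotient_toWords (u : Uf3) : toQuotient (toWords u) = Submodule.Quotient.mk u := by
  simp [toQuotient]

lemma toQuotient_word (w : Word) : toQuotient (word ℂ w) = Submodule.Quotient.mk (monomial w) := by
  rw [← toWords_monomial, toQuotient_toWords]

noncomputable def leadingCoeff (p : Idx) : Uf3 ⧸ I5 →ₗ[ℂ] ℂ :=
  I5.liftQ (wordCoeff ℂ (leadingWord p) ∘ₗ toWords.toLinearMap) fun _ hu =>
    LinearMap.mem_ker.mpr <| wordCoeff_eq_zero_of_mem_wordSpan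
      (not_or_intro (not_xBeforeY_leadingWord p) (not_endsWithZ_leadingWord p))
      (toWords_mem_of_mem_I5 hu)

lemma leadingCoeff_mk (p : Idx) (u : Uf3) :
    leadingCoeff p (Submodule.Quotient.mk u) = wordCoeff ℂ (leadingWord p) (toWords u) :=
  rfl

noncomputable def bracketClass (p : Idx) : Uf3 ⧸ I5 := Submodule.Quotient.mk (ι (bracketElt p))

lemma wordCoeff_eq_zero_of_mem_ltSpan {c w : Word} (hw : ¬ XBeforeY w)
    (hle : zWeight c ≤ zWeight w) {m : WordAlgebra} (hm : m ∈ ltSpan c) : wordCoeff ℂ w m = 0 :=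
  wordCoeff_eq_zero_of_mem_wordSpan (not_or_intro (fun h => (h.2.trans_le hle).false) hw) hm

lemma leadingCoeff_bracketClass {p q : Idx}
    (hle : zWeight (leadingWord q) ≤ zWeight (leadingWord p)) :
    leadingCoeff p (bracketClass q) = if q = p then 1 else 0 := by
  rw [bracketClass, leadingCoeff_mk,
    ← sub_add_cancel (toWords (ι (bracketElt q))) (word ℂ (leadingWord q)), map_add,
    wordCoeff_eq_zero_of_mem_ltSpan (not_xBeforeY_leadingWord p) hle
      (hasLeadingWord_bracketElt q), zero_add]
  split_ifs with h
  · exact h ▸ wordCoeff_word_self _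
  · exact wordCoeff_word_of_ne (leadingWord_injective.ne h)

lemma linearIndependent_bracketClass : LinearIndependent ℂ bracketClass :=
  linearIndependent_of_triangular (fun p => zWeight (leadingWord p)) leadingCoeff
    (fun _ => by simpa using leadingCoeff_bracketClass le_rfl)
    (fun _ _ hle hne => by simpa [hne] using leadingCoeff_bracketClass hle)

lemma toQuotient_word_eq_zero {w : Word} (h : XBeforeY w ∨ EndsWithZ w) :
    toQuotient (word ℂ w) = 0 := by
  rw [toQuotient_word, Submodule.Quotient.mk_eq_zero]
  exact monomial_mem_I5 h

lemma wordSpan_le_comap_M11 : wordSpan ℂ (fun w => 0 ∈ w ∧ 1 ∈ w) ≤ M11.comap toQuotient := by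
  refine span_le.mpr ?_
  rintro _ ⟨w, ⟨h0, h1⟩, rfl⟩
  rw [SetLike.mem_coe, mem_comap, toQuotient_word]
  exact subset_span ⟨w, h0, h1, rfl⟩

lemma span_bracketClass_le_M11 : span ℂ (Set.range bracketClass) ≤ M11 := by
  refine span_le.mpr ?_
  rintro _ ⟨p, rfl⟩
  rw [SetLike.mem_coe, bracketClass, ← toQuotient_toWords]
  refine wordSpan_le_comap_M11 (wordSpan_mono ?_ (hasLeadingWord_bracketElt p).mem_leSpan)
  rintro w (hw | hw)
  · exact ⟨hw.1.mem_iff.mpr (zero_mem_leadingWord p), hw.1.mem_iff.mpr (one_mem_leadingWord p)⟩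
  · exact ⟨hw.zero_mem, hw.one_mem⟩

lemma toQuotient_word_mem_span {w : Word} (h0 : 0 ∈ w) (h1 : 1 ∈ w) :
    toQuotient (word ℂ w) ∈ span ℂ (Set.range bracketClass) := by
  induction hn : zWeight w using Nat.strong_induction_on generalizing w with
  | _ n ih =>
    by_cases hdead : XBeforeY w ∨ EndsWithZ w
    · rw [toQuotient_word_eq_zero hdead]
      exact zero_mem _
    obtain ⟨p, rfl⟩ := exists_leadingWord_eq h0 h1 (not_or.mp hdead).1 (not_or.mp hdead).2
    have hlower : ltSpan (leadingWord p) ≤ (span ℂ (Set.range bracketClass)).comap toQuotient := by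
      refine span_le.mpr ?_
      rintro _ ⟨u, hu | hu, rfl⟩
      · exact ih _ (hn ▸ hu.2) (hu.1.mem_iff.mpr h0) (hu.1.mem_iff.mpr h1) rfl
      · rw [SetLike.mem_coe, mem_comap, toQuotient_word_eq_zero (Or.inl hu)]
        exact zero_mem _
    have key : toQuotient (word ℂ (leadingWord p)) = bracketClass p -
        toQuotient (toWords (ι (bracketElt p)) - word ℂ (leadingWord p)) := by
      rw [map_sub, toQuotient_toWords, bracketClass, sub_sub_cancel]
    rw [key]
    exact sub_mem (subset_span ⟨p, rfl⟩) (hlower (hasLeadingWord_bracketElt p))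

lemma M11_le_span_bracketClass : M11 ≤ span ℂ (Set.range bracketClass) := by
  refine span_le.mpr ?_
  rintro _ ⟨w, h0, h1, rfl⟩
  rw [SetLike.mem_coe, ← toQuotient_word]
  exact toQuotient_word_mem_span h0 h1

theorem basis_of_brackets :
    LinearIndependent ℂ
      (fun p : Idx => (Submodule.Quotient.mk (ι (bracketElt p)) : Uf3 ⧸ I5)) ∧
    Submodule.span ℂ
      (Set.range fun p : Idx =>
        (Submodule.Quotient.mk (ι (bracketElt p)) : Uf3 ⧸ I5)) = M11 :=
  ⟨linearIndependent_bracketClass, le_antisymm span_bracketClass_le_M11 M11_le_span_bracketClass⟩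
end
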